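/- arXiv:2507.07152 — 11 statements merged into one kernel-verified Lean document; each statement's English description precedes it below -/
import Mathlib

section
/- Let (a_1, a_2, ...) and (b_1, b_2, ...) be partitions (weakly decreasing sequences of nonnegative integers, almost all zero) with conjugate partitions (p_1, p_2, ...) and (q_1, q_2, ...) respectively, and let k ≥ 0 be an integer. Then a_j ≥ b_{j+k} for all j ≥ 1 if and only if p_j ≥ q_j − k for all j ≥ 1. -/
/-- An infinite weakly decreasing sequence of nonnegative integers, almost all zero. -/
def IsPartition (p : ℕ → ℕ) : Prop :=
  (∀ i j, i ≤ j → p j ≤ p i) ∧ ∃ N, ∀ i, N ≤ i → p i = 0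

/-- `conjPart p k` is the `(k+1)`-st entry of the conjugate partition of `p`,
where `p i` denotes the `(i+1)`-st entry of `p`; i.e. `#{i : p_i ≥ k+1}`. -/
noncomputable def conjPart (p : ℕ → ℕ) (k : ℕ) : ℕ :=
  Nat.card {i : ℕ | k + 1 ≤ p i}

/-- Sum of all entries of an (almost all zero) sequence. -/
noncomputable def psum (p : ℕ → ℕ) : ℕ := ∑ᶠ i, p i

/-- The tail `(p_1, p_2, …)` of a starred partition `p_* = (p_0, p_1, …)`. -/
def ptail (p : ℕ → ℕ) : ℕ → ℕ := fun i => p (i + 1)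

/-- `CMaj s r` : the starred partition `s_*` is conjugate-majorized by `r_*`
(written `s_* ∠ r_*`): `r_0 = s_0 + 1` and `r_i = s_i + 1` for all
`0 ≤ i ≤ g`, where `g = max {i : r_i > s_i}`. -/
def CMaj (s r : ℕ → ℕ) : Prop :=
  r 0 = s 0 + 1 ∧ ∀ i ≤ sSup {j | s j < r j}, r i = s i + 1

lemma conjPart_lt_iff (p : ℕ → ℕ) (hp : IsPartition p) (i j : ℕ) :
    j < conjPart p i ↔ i + 1 ≤ p j := by
  obtain ⟨hmono, N, hN⟩ := hp
  set T : Set ℕ := {j | p j ≤ i} with hT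
  have hTne : T.Nonempty := ⟨N, by simp [hT, hN N le_rfl]⟩
  set n := sInf T with hn
  have hnT : n ∈ T := Nat.sInf_mem hTne
  have hset : {j : ℕ | i + 1 ≤ p j} = Set.Iio n := by
    ext j
    simp only [Set.mem_setOf_eq, Set.mem_Iio]
    constructor
    · intro hj
      by_contra h
      push_neg at h
      have := hmono n j h
      simp only [hT, Set.mem_setOf_eq] at hnT
      omega
    · intro hj
      have : j ∉ T := Nat.notMem_of_lt_sInf hj
      simp only [hT, Set.mem_setOf_eq, not_le] at this
      omega
  have : conjPart p i = n := by
    rw [conjPart, hset, Nat.card_eq_card_toFinset]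
    simp
  have hmem := Set.ext_iff.mp hset j
  simp only [Set.mem_setOf_eq, Set.mem_Iio] at hmem
  omega

/-- for partitions `a, b` (here `a i` is `a_{i+1}`) with conjugate
partitions `p, q`, and `k ≥ 0`: `a_j ≥ b_{j+k}` for all `j ≥ 1` iff
`p_j ≥ q_j − k` for all `j ≥ 1`. -/
theorem conj_shift_iff (a b : ℕ → ℕ) (ha : IsPartition a) (hb : IsPartition b)
    (k : ℕ) :
    (∀ i, b (i + k) ≤ a i) ↔ (∀ i, conjPart b i ≤ conjPart a i + k) := by
  constructor
  · intro h i
    by_contra hc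
    push_neg at hc
    have hj : conjPart a i + k < conjPart b i := hc
    set j := conjPart a i with hja
    have h1 : j + k < conjPart b i := by omega
    have h2 : i + 1 ≤ b (j + k) := (conjPart_lt_iff b hb i (j + k)).mp h1
    have h3 : i + 1 ≤ a j := le_trans h2 (h j)
    have h4 : j < conjPart a i := (conjPart_lt_iff a ha i j).mpr h3
    omega
  · intro h j
    by_contra hc
    push_neg at hc
    set i := a j with hi
    have h1 : i + 1 ≤ b (j + k) := hc
    have h2 : j + k < conjPart b i := (conjPart_lt_iff b hb i (j + k)).mpr h1
    have h3 : j < conjPart a i := by have := h i; omega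
    have h4 : i + 1 ≤ a j := (conjPart_lt_iff a ha i j).mp h3
    omega
end

section
/- Let r_* = (r_0, r_1, ...) and s_* = (s_0, s_1, ...) be partitions such that s_* is conjugate-majorized by r_*, let g = max{i : r_i > s_i}, and let c = (c_1, c_2, ...) be the conjugate partition of r = (r_1, r_2, ...). Then g = c_1 or g ≤ c_2. -/
/-- if `s_* ∠ r_*`, `g = max{i : r_i > s_i}` and `c` is the
conjugate partition of the tail `r = (r_1, r_2, …)`, then `g = c_1` or `g ≤ c_2`. -/
theorem cmaj_sup_eq_or_le_conj (r s : ℕ → ℕ) (hr : IsPartition r)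
    (hs : IsPartition s) (h : CMaj s r) :
    sSup {j | s j < r j} = conjPart (ptail r) 0 ∨
    sSup {j | s j < r j} ≤ conjPart (ptail r) 1 := by
  obtain ⟨hrmono, N, hN⟩ := hr
  obtain ⟨hsmono, -⟩ := hs
  obtain ⟨h0, hri⟩ := h
  set S := {j | s j < r j} with hS
  have hbdd : BddAbove S := by
    refine ⟨N, fun j hj => ?_⟩
    by_contra hc
    push_neg at hc
    have := hN j (le_of_lt hc)
    simp only [hS, Set.mem_setOf_eq] at hj
    omega
  have hne : S.Nonempty := ⟨0, by simp [hS, h0]⟩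
  set g := sSup S with hgdef
  have hgt : ∀ j, g < j → r j ≤ s j := by
    intro j hj
    by_contra hc
    push_neg at hc
    exact absurd (le_csSup hbdd (show j ∈ S from hc)) (by omega)
  by_cases hcase : r (g + 1) = 0
  · left
    have hset : {i : ℕ | 0 + 1 ≤ ptail r i} = Set.Iio g := by
      ext i
      simp only [Set.mem_setOf_eq, Set.mem_Iio, ptail]
      constructor
      · intro hi
        by_contra hc
        push_neg at hc
        have := hrmono (g + 1) (i + 1) (by omega)
        omega
      · intro hi
        have := hri (i + 1) (by omega)
        omega
    rw [conjPart, hset]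
    simp
  · right
    have hr1 : 1 ≤ r (g + 1) := by omega
    have hs1 : 1 ≤ s (g + 1) := le_trans hr1 (hgt (g + 1) (by omega))
    have hsub : Set.Iio g ⊆ {i : ℕ | 1 + 1 ≤ ptail r i} := by
      intro i hi
      simp only [Set.mem_Iio] at hi
      have h1 := hri (i + 1) (by omega)
      have h2 := hsmono (i + 1) (g + 1) (by omega)
      simp only [Set.mem_setOf_eq, ptail]
      omega
    have hfin : {i : ℕ | 1 + 1 ≤ ptail r i}.Finite := by
      apply Set.Finite.subset (Set.finite_Iio N)
      intro i hi
      simp only [Set.mem_setOf_eq, ptail] at hi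
      simp only [Set.mem_Iio]
      by_contra hc
      push_neg at hc
      have := hN (i + 1) (by omega)
      omega
    calc g = Nat.card (Set.Iio g) := by simp
      _ ≤ conjPart (ptail r) 1 := by
          rw [conjPart, Nat.card_coe_set_eq, Nat.card_coe_set_eq]
          exact Set.ncard_le_ncard hsub hfin
end

section
/- Let p_* = (p_0, p_1, ...) be a partition, let a = (a_1, a_2, ...) be the conjugate partition of p = (p_1, p_2, ...), and let x be an integer. There exists a partition q_* = (q_0, q_1, ...) such that q_* is conjugate-majorized by p_* and |q| = |p| − x if and only if either (a) p_0 = 1 and x = a_1, or (b) p_0 > 1 and (x = a_1 or x ≤ a_2). -/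
/-!
Let `g` be the last index where `q_*` drops below `p_*`. Then `p_i - q_i` is `1` for `i ≤ g`
and `≤ 0` beyond, so `x ≤ g`. If `q_g = 0`, everything past `g` vanishes, which forces
`g = a_1` and `x = a_1`; otherwise `p_g ≥ 2`, so `g ≤ a_2` and `p_0 ≥ 2`.
Conversely `q = p - 1` realises `x = a_1`, and when `p_0 ≥ 2` and `x = a_2 - t`, the sequence
`q_i = max (p_i - 1) [i ≤ a_1 + t]` lowers exactly the parts `≥ 2` and appends `t` parts `1`.
-/
open Function

lemma hasFiniteSupport_indicator_Ico (a b : ℕ) :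
    HasFiniteSupport ((Set.Ico a b).indicator (1 : ℕ → ℕ)) :=
  (Set.finite_Ico a b).subset Set.support_indicator_subset

section psum

variable {f g : ℕ → ℕ}

lemma psum_add (hf : HasFiniteSupport f) (hg : HasFiniteSupport g) :
    psum (f + g) = psum f + psum g :=
  finsum_add_distrib hf hg

lemma psum_mono (hf : HasFiniteSupport f) (hg : HasFiniteSupport g) (h : f ≤ g) :
    psum f ≤ psum g :=
  finsum_le_finsum' hf hg h

lemma psum_indicator_Ico (a b : ℕ) : psum ((Set.Ico a b).indicator 1) = b - a := by
  rw [psum, ← finsum_mem_def, ← Finset.coe_Ico, finsum_mem_coe_finset]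
  simp

end psum

namespace IsPartition

variable {p : ℕ → ℕ}

lemma hasFiniteSupport (hp : IsPartition p) : HasFiniteSupport p := by
  obtain ⟨N, hN⟩ := hp.2
  refine (Set.finite_Iio N).subset fun i hi => ?_
  by_contra h
  exact hi (hN i (not_lt.mp h))

lemma tail (hp : IsPartition p) : IsPartition (ptail p) := by
  obtain ⟨hanti, N, hN⟩ := hp
  exact ⟨fun i j hij => hanti _ _ (by omega), N, fun i hi => hN _ (by omega)⟩

lemma bddAbove_setOf_lt (hp : IsPartition p) (q : ℕ → ℕ) : BddAbove {j | q j < p j} := by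
  obtain ⟨N, hN⟩ := hp.2
  refine ⟨N, fun j (hj : q j < p j) => ?_⟩
  by_contra h
  have := hN j (by omega)
  omega

lemma le_of_sSup_lt (hp : IsPartition p) {q : ℕ → ℕ} {i : ℕ}
    (hi : sSup {j | q j < p j} < i) : p i ≤ q i := by
  by_contra h
  exact not_le.mpr hi (le_csSup (hp.bddAbove_setOf_lt q) (not_le.mp h))

lemma lt_conjPart_iff (hp : IsPartition p) (k i : ℕ) : i < conjPart p k ↔ k + 1 ≤ p i := by
  have hex : ∃ n, p n < k + 1 := by
    obtain ⟨N, hN⟩ := hp.2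
    exact ⟨N, by simp [hN N le_rfl]⟩
  have hset : {i | k + 1 ≤ p i} = Set.Iio (Nat.find hex) := by
    ext i
    simp only [Set.mem_ofPred_eq, Set.mem_Iio]
    constructor
    · intro hi
      by_contra h
      have := hp.1 _ _ (not_lt.mp h)
      have := Nat.find_spec hex
      omega
    · intro hi
      simpa using Nat.find_min hex hi
  rw [conjPart, hset, Nat.card_coe_set_eq, Set.ncard_Iio_nat]
  exact (Set.ext_iff.mp hset i).symm

lemma le_iff_le_conjPart_tail (hp : IsPartition p) {k : ℕ} (h0 : k + 1 ≤ p 0) (i : ℕ) :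
    k + 1 ≤ p i ↔ i ≤ conjPart (ptail p) k := by
  cases i with
  | zero => simpa using h0
  | succ j => exact (hp.tail.lt_conjPart_iff k j).symm.trans Nat.lt_iff_add_one_le

end IsPartition

namespace CMaj

variable {p q : ℕ → ℕ}

lemma of_lt_iff (hp : IsPartition p) {k : ℕ} (h0 : k + 1 ≤ p 0) (hle : ∀ i, p i ≤ q i + 1)
    (hlt : ∀ i, q i < p i ↔ k + 1 ≤ p i) : CMaj q p := by
  have hS : {j | q j < p j} = {j | k + 1 ≤ p j} := Set.ext hlt
  have hmem : k + 1 ≤ p (sSup {j | q j < p j}) :=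
    hS ▸ Nat.sSup_mem ⟨0, h0⟩ (hS ▸ hp.bddAbove_setOf_lt q)
  have hsucc : ∀ i ≤ sSup {j | q j < p j}, p i = q i + 1 := fun i hi => by
    have := (hlt i).mpr (hmem.trans (hp.1 _ _ hi))
    have := hle i
    omega
  exact ⟨hsucc 0 (Nat.zero_le _), hsucc⟩

lemma tail_le_add_indicator (hp : IsPartition p) (h : CMaj q p) :
    ptail p ≤ ptail q + (Set.Ico 0 (sSup {j | q j < p j})).indicator 1 := by
  intro i
  simp only [ptail, Pi.add_apply, Set.indicator_apply, Set.mem_Ico, Pi.one_apply]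
  split_ifs with hi
  · exact (h.2 (i + 1) (by omega)).le
  · exact (hp.le_of_sSup_lt (by omega)).trans (Nat.le_add_right _ _)

lemma psum_tail_le (hp : IsPartition p) (hq : IsPartition q) (h : CMaj q p) :
    psum (ptail p) ≤ psum (ptail q) + sSup {j | q j < p j} := by
  have hind := hasFiniteSupport_indicator_Ico 0 (sSup {j | q j < p j})
  calc psum (ptail p)
      ≤ psum (ptail q + (Set.Ico 0 (sSup {j | q j < p j})).indicator 1) :=
        psum_mono hp.tail.hasFiniteSupport (hq.tail.hasFiniteSupport.add hind)
          (h.tail_le_add_indicator hp)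
    _ = psum (ptail q) + sSup {j | q j < p j} := by
        rw [psum_add hq.tail.hasFiniteSupport hind, psum_indicator_Ico, Nat.sub_zero]

lemma psum_tail_eq_of_eq_zero (hp : IsPartition p) (hq : IsPartition q) (h : CMaj q p)
    (hqg : q (sSup {j | q j < p j}) = 0) :
    psum (ptail p) = psum (ptail q) + conjPart (ptail p) 0 := by
  have hle := h.psum_tail_le hp hq
  have hsucc := h.2
  have hgt : ∀ i, sSup {j | q j < p j} < i → p i ≤ q i := fun _ => hp.le_of_sSup_lt
  generalize sSup {j | q j < p j} = g at hqg hle hsucc hgt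
  have hzero : ∀ i, g < i → p i = 0 := fun i hi => by
    have := hgt i hi
    have := hq.1 _ _ hi.le
    omega
  have hone : ∀ i, 1 ≤ p i ↔ i ≤ conjPart (ptail p) 0 :=
    hp.le_iff_le_conjPart_tail (by rw [h.1]; omega)
  have hg : g = conjPart (ptail p) 0 := by
    have := (hone g).mp (by rw [hsucc g le_rfl]; omega)
    have := (hone (g + 1)).not.mp (by rw [hzero _ (Nat.lt_succ_self g)]; omega)
    omega
  have hge : psum (ptail q) + g ≤ psum (ptail p) := by
    calc psum (ptail q) + g
        = psum (ptail q + (Set.Ico 0 g).indicator 1) := by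
          rw [psum_add hq.tail.hasFiniteSupport (hasFiniteSupport_indicator_Ico 0 g),
            psum_indicator_Ico, Nat.sub_zero]
      _ ≤ psum (ptail p) := by
          refine psum_mono (hq.tail.hasFiniteSupport.add (hasFiniteSupport_indicator_Ico 0 g))
            hp.tail.hasFiniteSupport fun i => ?_
          simp only [ptail, Pi.add_apply, Set.indicator_apply, Set.mem_Ico, Pi.one_apply]
          split_ifs with hi
          · exact (hsucc (i + 1) (by omega)).ge
          · have := hq.1 _ _ (show g ≤ i + 1 by omega)
            omega
  omega

lemma psum_tail_le_of_pos (hp : IsPartition p) (hq : IsPartition q) (h : CMaj q p)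
    (hqg : 0 < q (sSup {j | q j < p j})) :
    2 ≤ p 0 ∧ psum (ptail p) ≤ psum (ptail q) + conjPart (ptail p) 1 := by
  have h2g : 1 + 1 ≤ p (sSup {j | q j < p j}) := by rw [h.2 _ le_rfl]; omega
  have h2 : 2 ≤ p 0 := h2g.trans (hp.1 _ _ (Nat.zero_le _))
  have := (hp.le_iff_le_conjPart_tail h2 _).mp h2g
  exact ⟨h2, (h.psum_tail_le hp hq).trans (by omega)⟩

end CMaj

namespace IsPartition

variable {p : ℕ → ℕ}

lemma exists_cmaj_psum_tail_add_conjPart_zero (hp : IsPartition p) (h0 : 1 ≤ p 0) :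
    ∃ q, IsPartition q ∧ CMaj q p ∧ psum (ptail q) + conjPart (ptail p) 0 = psum (ptail p) := by
  obtain ⟨N, hN⟩ := hp.2
  have hq : IsPartition fun i => p i - 1 :=
    ⟨fun i j hij => Nat.sub_le_sub_right (hp.1 i j hij) 1, N, fun i hi => by simp [hN i hi]⟩
  refine ⟨_, hq, CMaj.of_lt_iff hp h0 (fun i => by omega) (fun i => by omega), ?_⟩
  have htail : ptail (fun i => p i - 1) + (Set.Ico 0 (conjPart (ptail p) 0)).indicator 1 =
      ptail p := by
    ext i
    have := hp.tail.lt_conjPart_iff 0 i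
    simp only [ptail, Pi.add_apply, Set.indicator_apply, Set.mem_Ico, Pi.one_apply] at this ⊢
    split_ifs <;> omega
  have hsum := congrArg psum htail
  rwa [psum_add hq.tail.hasFiniteSupport (hasFiniteSupport_indicator_Ico _ _),
    psum_indicator_Ico, Nat.sub_zero] at hsum

lemma exists_cmaj_psum_tail_add_conjPart_one (hp : IsPartition p) (h0 : 2 ≤ p 0) (t : ℕ) :
    ∃ q, IsPartition q ∧ CMaj q p ∧
      psum (ptail q) + conjPart (ptail p) 1 = psum (ptail p) + t := by
  obtain ⟨N, hN⟩ := hp.2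
  set a₁ := conjPart (ptail p) 0
  set q : ℕ → ℕ := fun i => max (p i - 1) (if i ≤ a₁ + t then 1 else 0)
  have hq : IsPartition q := by
    have hanti : Antitone q := Antitone.max
      (fun i j hij => Nat.sub_le_sub_right (hp.1 i j hij) 1)
      (fun i j (hij : i ≤ j) => by split_ifs <;> omega)
    refine ⟨fun i j hij => hanti hij, max N (a₁ + t + 1), fun i hi => ?_⟩
    simp [q, hN i (by omega), show ¬ i ≤ a₁ + t by omega]
  have hone : ∀ i, 1 ≤ p i ↔ i ≤ a₁ := hp.le_iff_le_conjPart_tail (by omega)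
  refine ⟨q, hq, CMaj.of_lt_iff hp (k := 1) h0 (fun i => by simp only [q]; omega)
    (fun i => by have := hone i; simp only [q]; split_ifs <;> omega), ?_⟩
  have htail : ptail q + (Set.Ico 0 (conjPart (ptail p) 1)).indicator 1 =
      ptail p + (Set.Ico a₁ (a₁ + t)).indicator 1 := by
    ext i
    have h1 := hp.tail.lt_conjPart_iff 0 i
    have h2 := hp.tail.lt_conjPart_iff 1 i
    simp only [q, ptail, Pi.add_apply, Set.indicator_apply, Set.mem_Ico, Pi.one_apply] at h1 h2 ⊢
    split_ifs <;> omega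
  have hsum := congrArg psum htail
  rwa [psum_add hq.tail.hasFiniteSupport (hasFiniteSupport_indicator_Ico _ _),
    psum_add hp.tail.hasFiniteSupport (hasFiniteSupport_indicator_Ico _ _),
    psum_indicator_Ico, psum_indicator_Ico, Nat.sub_zero, Nat.add_sub_cancel_left] at hsum

end IsPartition

/-- for a partition `p_*` with `a` the conjugate partition of its
tail `p`, and an integer `x`: there is a partition `q_*` with `q_* ∠ p_*` and
`|q| = |p| − x` iff either (`p_0 = 1` and `x = a_1`) or
(`p_0 > 1` and (`x = a_1` or `x ≤ a_2`)). -/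
theorem exists_cmaj_with_weight_iff (p : ℕ → ℕ) (hp : IsPartition p) (x : ℤ) :
    (∃ q : ℕ → ℕ, IsPartition q ∧ CMaj q p ∧
        (psum (ptail q) : ℤ) = (psum (ptail p) : ℤ) - x) ↔
    ((p 0 = 1 ∧ x = (conjPart (ptail p) 0 : ℤ)) ∨
     (1 < p 0 ∧ (x = (conjPart (ptail p) 0 : ℤ) ∨ x ≤ (conjPart (ptail p) 1 : ℤ)))) := by
  constructor
  · rintro ⟨q, hq, hqp, hx⟩
    have hp0 : p 0 = q 0 + 1 := hqp.1
    rcases Nat.eq_zero_or_pos (q (sSup {j | q j < p j})) with hqg | hqg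
    · have := hqp.psum_tail_eq_of_eq_zero hp hq hqg
      omega
    · have := hqp.psum_tail_le_of_pos hp hq hqg
      omega
  · intro h
    by_cases hx : x = conjPart (ptail p) 0
    · obtain ⟨q, hq, hqp, hw⟩ := hp.exists_cmaj_psum_tail_add_conjPart_zero (by omega)
      exact ⟨q, hq, hqp, by omega⟩
    · obtain ⟨q, hq, hqp, hw⟩ :=
        hp.exists_cmaj_psum_tail_add_conjPart_one (by omega) (conjPart (ptail p) 1 - x).toNat
      exact ⟨q, hq, hqp, by omega⟩
end

section
/- Let c = (c_1, ..., c_{m+1}) and d = (d_1, ..., d_m) be finite weakly decreasing sequences of nonnegative integers. Let r = (r_1, r_2, ...) and s = (s_1, s_2, ...) be the conjugate partitions of c and d, set r_0 = m + 1, s_0 = m, r_* = (r_0, r_1, ...), s_* = (s_0, s_1, ...). Then c is 1step-majorized by d if and only if s_* is conjugate-majorized by r_*. -/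
/-- An infinite weakly decreasing sequence of nonnegative integers, almost all zero. -/
private lemma chainMono (n : ℕ) (f : ℕ → ℕ)
    (h : ∀ i, 1 ≤ i → i + 1 ≤ n → f (i + 1) ≤ f i) :
    ∀ a b, 1 ≤ a → a ≤ b → b ≤ n → f b ≤ f a := by
  intro a b ha hab hbn
  induction b with
  | zero => omega
  | succ b ih =>
    rcases Nat.eq_or_lt_of_le hab with rfl | hlt
    · exact le_refl _
    · exact le_trans (h b (by omega) (by omega)) (ih (by omega) (by omega))

private lemma cardFilter (n k : ℕ) (f : ℕ → ℕ) :
    Nat.card {i | 1 ≤ i ∧ i ≤ n ∧ k ≤ f i} =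
      ((Finset.Icc 1 n).filter (fun j => k ≤ f j)).card := by
  have hset : {i | 1 ≤ i ∧ i ≤ n ∧ k ≤ f i}
      = ↑((Finset.Icc 1 n).filter (fun j => k ≤ f j)) := by
    ext j
    simp [Finset.mem_Icc, and_assoc]
  rw [hset, Nat.card_coe_set_eq, Set.ncard_coe_finset]

private lemma cardLe (n k : ℕ) (f : ℕ → ℕ) :
    Nat.card {j | 1 ≤ j ∧ j ≤ n ∧ k ≤ f j} ≤ n := by
  rw [cardFilter]
  calc ((Finset.Icc 1 n).filter (fun j => k ≤ f j)).card
      ≤ (Finset.Icc 1 n).card := Finset.card_filter_le _ _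
    _ = n := by rw [Nat.card_Icc]; omega

private lemma threshold (n : ℕ) (f : ℕ → ℕ)
    (hf : ∀ a b, 1 ≤ a → a ≤ b → b ≤ n → f b ≤ f a)
    (k i : ℕ) (hi1 : 1 ≤ i) (hin : i ≤ n) :
    (k ≤ f i ↔ i ≤ Nat.card {j | 1 ≤ j ∧ j ≤ n ∧ k ≤ f j}) := by
  rw [cardFilter]
  constructor
  · intro hk
    have hsub : Finset.Icc 1 i ⊆ (Finset.Icc 1 n).filter (fun j => k ≤ f j) := by
      intro j hj
      simp only [Finset.mem_Icc] at hj
      simp only [Finset.mem_filter, Finset.mem_Icc]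
      exact ⟨⟨hj.1, le_trans hj.2 hin⟩, le_trans hk (hf j i hj.1 hj.2 hin)⟩
    calc i = (Finset.Icc 1 i).card := by rw [Nat.card_Icc]; omega
      _ ≤ _ := Finset.card_le_card hsub
  · intro hcard
    by_contra hlt
    push_neg at hlt
    have hsub : (Finset.Icc 1 n).filter (fun j => k ≤ f j) ⊆ Finset.Icc 1 (i - 1) := by
      intro j hj
      simp only [Finset.mem_filter, Finset.mem_Icc] at hj
      simp only [Finset.mem_Icc]
      refine ⟨hj.1.1, ?_⟩
      by_contra hji
      push_neg at hji
      have := hf i j hi1 (by omega) hj.1.2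
      omega
    have h2 := Finset.card_le_card hsub
    rw [Nat.card_Icc] at h2
    omega

private lemma aux (m : ℕ) (c d : ℕ → ℕ)
    (hcm : ∀ a b, 1 ≤ a → a ≤ b → b ≤ m + 1 → c b ≤ c a)
    (hdm : ∀ a b, 1 ≤ a → a ≤ b → b ≤ m → d b ≤ d a)
    (R S : ℕ → ℕ) (hR0 : R 0 = m + 1) (hS0 : S 0 = m)
    (hRk : ∀ k i, 1 ≤ i → i ≤ m + 1 → (k ≤ c i ↔ i ≤ R k))
    (hSk : ∀ k i, 1 ≤ i → i ≤ m → (k ≤ d i ↔ i ≤ S k))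
    (hRle : ∀ k, R k ≤ m + 1)
    (hSle : ∀ k, S k ≤ m) :
    (∀ i, sInf ({j | 1 ≤ j ∧ j ≤ m ∧ d j < c j} ∪ {m + 1}) ≤ i → i ≤ m →
        d i = c (i + 1)) ↔
    (R 0 = S 0 + 1 ∧ ∀ i ≤ sSup {j | S j < R j}, R i = S i + 1) := by
  set U : Set ℕ := {j | 1 ≤ j ∧ j ≤ m ∧ d j < c j} ∪ {m + 1} with hU
  have hUne : U.Nonempty := ⟨m + 1, Or.inr rfl⟩
  set h := sInf U with hh
  have hhU : h ∈ U := Nat.sInf_mem hUne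
  have hh1 : 1 ≤ h := by
    rcases hhU with h1 | h1
    · exact h1.1
    · simp only [Set.mem_singleton_iff] at h1; omega
  have hhm1 : h ≤ m + 1 := by
    rcases hhU with h1 | h1
    · exact le_trans h1.2.1 (by omega)
    · simp only [Set.mem_singleton_iff] at h1; omega
  have hlt : ∀ j, 1 ≤ j → j ≤ m → j < h → c j ≤ d j := by
    intro j h1 h2 h3
    by_contra hcon
    have hjU : j ∈ U := Or.inl ⟨h1, h2, by omega⟩
    have := Nat.sInf_le hjU
    omega
  set T : Set ℕ := {j | S j < R j} with hT
  have hT0 : (0 : ℕ) ∈ T := by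
    simp only [hT, Set.mem_setOf_eq]; omega
  have hTbdd : BddAbove T := by
    refine ⟨c 1, fun j hj => ?_⟩
    rcases Nat.eq_zero_or_pos j with rfl | hj1
    · exact Nat.zero_le _
    · have hj' : S j < R j := hj
      have h1 : 1 ≤ R j := by omega
      exact (hRk j 1 le_rfl (by omega)).mpr h1
  set g := sSup T with hg
  have hgT : g ∈ T := Nat.sSup_mem ⟨0, hT0⟩ hTbdd
  have hmemg : ∀ j ∈ T, j ≤ g := fun j hj => le_csSup hTbdd hj
  have claim2 : ∀ k, 1 ≤ k → c h < k → R k ≤ S k := by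
    intro k hk1 hkh
    by_cases hR1 : 1 ≤ R k
    · have hck : k ≤ c (R k) := (hRk k (R k) hR1 (hRle k)).mpr le_rfl
      have hRh : R k < h := by
        by_contra hcon
        push_neg at hcon
        have := hcm h (R k) hh1 hcon (hRle k)
        omega
      have hle : c (R k) ≤ d (R k) := hlt (R k) hR1 (by omega) hRh
      exact (hSk k (R k) hR1 (by omega)).mp (by omega)
    · omega
  have hgch : c h < g → False := by
    intro hcon
    have h1 : 1 ≤ g := by omega
    have hST : S g < R g := hgT
    have := claim2 g h1 hcon
    omega
  constructor
  · intro H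
    refine ⟨by omega, ?_⟩
    intro k hkg
    rcases Nat.eq_zero_or_pos k with rfl | hk1
    · omega
    · have hkch : k ≤ c h := by
        by_contra hcon
        exact hgch (by omega)
      have hhRk : h ≤ R k := (hRk k h hh1 hhm1).mp hkch
      have ht1 : 1 ≤ R k := le_trans hh1 hhRk
      have htm : R k ≤ m + 1 := hRle k
      have hge : R k - 1 ≤ S k := by
        rcases Nat.eq_or_lt_of_le ht1 with h1 | h1
        · omega
        · have ht1m : 1 ≤ R k - 1 := by omega
          have hdt : k ≤ d (R k - 1) := by
            by_cases hth : h ≤ R k - 1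
            · have hH := H (R k - 1) hth (by omega)
              have he : R k - 1 + 1 = R k := by omega
              rw [he] at hH
              have hct : k ≤ c (R k) := (hRk k (R k) (by omega) htm).mpr le_rfl
              omega
            · push_neg at hth
              have hct : k ≤ c (R k - 1) := (hRk k (R k - 1) ht1m (by omega)).mpr (by omega)
              have := hlt (R k - 1) ht1m (by omega) hth
              omega
          exact (hSk k (R k - 1) ht1m (by omega)).mp hdt
      have hle2 : S k ≤ R k - 1 := by
        by_contra hcon
        push_neg at hcon
        have htS : R k ≤ S k := by omega
        have htm' : R k ≤ m := le_trans htS (hSle k)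
        have hdt : k ≤ d (R k) := (hSk k (R k) ht1 htm').mpr htS
        by_cases hth : h ≤ R k
        · have hH := H (R k) hth htm'
          have hck : k ≤ c (R k + 1) := by omega
          have := (hRk k (R k + 1) (by omega) (by omega)).mp hck
          omega
        · push_neg at hth
          have h2 : c h ≤ c (R k + 1) := hcm (R k + 1) h (by omega) (by omega) hhm1
          have hck : k ≤ c (R k + 1) := by omega
          have := (hRk k (R k + 1) (by omega) (by omega)).mp hck
          omega
      omega
  · rintro ⟨_, H1⟩ i hhi him
    have hhm : h ≤ m := le_trans hhi him
    have hdh : d h < c h := by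
      rcases hhU with h1 | h1
      · exact h1.2.2
      · simp only [Set.mem_singleton_iff] at h1; omega
    have hch1 : 1 ≤ c h := by omega
    have hchT : c h ≤ g := by
      apply hmemg
      show S (c h) < R (c h)
      have h1 : h ≤ R (c h) := (hRk (c h) h hh1 hhm1).mp le_rfl
      have h2 : S (c h) < h := by
        by_contra hcon
        push_neg at hcon
        have := (hSk (c h) h hh1 hhm).mpr hcon
        omega
      omega
    have hi1 : 1 ≤ i := le_trans hh1 hhi
    have hge : c (i + 1) ≤ d i := by
      rcases Nat.eq_zero_or_pos (c (i + 1)) with h0 | h1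
      · omega
      · have hkch : c (i + 1) ≤ c h := hcm h (i + 1) hh1 (by omega) (by omega)
        have hkg : c (i + 1) ≤ g := le_trans hkch hchT
        have hReq := H1 (c (i + 1)) hkg
        have hr : i + 1 ≤ R (c (i + 1)) := (hRk (c (i + 1)) (i + 1) (by omega) (by omega)).mp le_rfl
        have hs : i ≤ S (c (i + 1)) := by omega
        exact (hSk (c (i + 1)) i hi1 him).mpr hs
    have hle : d i ≤ c (i + 1) := by
      by_contra hcon
      push_neg at hcon
      have hk1 : 1 ≤ d i := by omega
      have hkdh : d i ≤ d h := hdm h i hh1 hhi him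
      have hkg : d i ≤ g := by omega
      have hReq := H1 (d i) hkg
      have hs : i ≤ S (d i) := (hSk (d i) i hi1 him).mp le_rfl
      have hr : ¬ (i + 1 ≤ R (d i)) := by
        intro hcon2
        have := (hRk (d i) (i + 1) (by omega) (by omega)).mpr hcon2
        omega
      omega
    omega


/-- for finite weakly decreasing sequences `c = (c_1, …, c_{m+1})`
and `d = (d_1, …, d_m)` of nonnegative integers (encoded with 1-based indices),
`c` is 1step-majorized by `d` (i.e. `d_i = c_{i+1}` for `h ≤ i ≤ m`, where
`h = min{i : d_i < c_i}` with the convention `d_{m+1} = −∞`) iff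
`s_* ∠ r_*`, where `r_* = (m+1, r_1, r_2, …)` and `s_* = (m, s_1, s_2, …)`
are built from the conjugate partitions of `c` and `d`. -/
theorem onestep_iff_cmaj (m : ℕ) (c d : ℕ → ℕ)
    (hc : ∀ i, 1 ≤ i → i ≤ m → c (i + 1) ≤ c i)
    (hd : ∀ i, 1 ≤ i → i + 1 ≤ m → d (i + 1) ≤ d i) :
    (∀ i, sInf ({j | 1 ≤ j ∧ j ≤ m ∧ d j < c j} ∪ {m + 1}) ≤ i → i ≤ m →
        d i = c (i + 1)) ↔
    CMaj (fun k => if k = 0 then m else Nat.card {i | 1 ≤ i ∧ i ≤ m ∧ k ≤ d i})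
         (fun k => if k = 0 then m + 1 else
            Nat.card {i | 1 ≤ i ∧ i ≤ m + 1 ∧ k ≤ c i}) := by
  have hcm : ∀ a b, 1 ≤ a → a ≤ b → b ≤ m + 1 → c b ≤ c a :=
    chainMono (m + 1) c (fun i h1 h2 => hc i h1 (by omega))
  have hdm : ∀ a b, 1 ≤ a → a ≤ b → b ≤ m → d b ≤ d a := chainMono m d hd
  have key := aux m c d hcm hdm
    (fun k => if k = 0 then m + 1 else Nat.card {i | 1 ≤ i ∧ i ≤ m + 1 ∧ k ≤ c i})
    (fun k => if k = 0 then m else Nat.card {i | 1 ≤ i ∧ i ≤ m ∧ k ≤ d i})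
    (by simp) (by simp)
    (by
      intro k i h1 h2
      by_cases hk : k = 0
      · subst hk; simp; omega
      · simp only [if_neg hk]; exact threshold (m + 1) c hcm k i h1 h2)
    (by
      intro k i h1 h2
      by_cases hk : k = 0
      · subst hk; simp; omega
      · simp only [if_neg hk]; exact threshold m d hdm k i h1 h2)
    (by
      intro k
      by_cases hk : k = 0
      · simp [hk]
      · simp only [if_neg hk]; exact cardLe (m + 1) k c)
    (by
      intro k
      by_cases hk : k = 0
      · simp [hk]
      · simp only [if_neg hk]; exact cardLe m k d)
  exact key
end

section
/- Let s_*^1 = (s_0^1, s_1^1, ...) and s_* = (s_0, s_1, ...) be partitions such that s_*^1 is conjugate-majorized by s_* and |s^1| ≤ |s|, where s = (s_1, s_2, ...) and s^1 = (s_1^1, s_2^1, ...). Then for all i ≥ 0, s_i − s_i^1 ≥ 1 − ⌊√(|s_*^1| + 1)⌋, where |s_*^1| = s_0^1 + s_1^1 + ⋯. -/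
/-
If `i ≤ g`, where `g` is the last index at which `s` exceeds `s^1`, then `s_i - s_i^1 = 1`.
Otherwise `s_i ≤ s_i^1`, and the deficit `d = s_i^1 - s_i` is paid for in `|s| - |s^1| ≥ 0` by the
`g` unit gains at the indices `1, …, g`, so `d ≤ g < i`. Since `s^1` is weakly decreasing,
`(i + 1) s_i^1 ≤ |s_*^1|`, and `d ≤ s_i^1`, `d + 1 ≤ i` give `(d + 1)² ≤ |s_*^1| + 1`.
-/

lemma psum_eq_sum_range {p : ℕ → ℕ} {N : ℕ} (hN : ∀ i, N ≤ i → p i = 0) :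
    psum p = ∑ i ∈ Finset.range N, p i :=
  finsum_eq_finsetSum_of_support_subset p fun i hi => by
    by_contra hiN
    exact hi (hN i (by simpa using hiN))

lemma IsPartition.succ_mul_le_psum {p : ℕ → ℕ} (hp : IsPartition p) (i : ℕ) :
    (i + 1) * p i ≤ psum p := by
  obtain ⟨hanti, N, hN⟩ := hp
  rw [psum_eq_sum_range (N := N + i + 1) fun j hj => hN j (by omega)]
  calc (i + 1) * p i = ∑ _j ∈ Finset.range (i + 1), p i := by simp
    _ ≤ ∑ j ∈ Finset.range (i + 1), p j :=
      Finset.sum_le_sum fun j hj => hanti j i (Finset.mem_range_succ_iff.mp hj)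
    _ ≤ ∑ j ∈ Finset.range (N + i + 1), p j :=
      Finset.sum_le_sum_of_subset (Finset.range_subset_range.mpr (by omega))

lemma bddAbove_setOf_lt {q p : ℕ → ℕ} {N : ℕ} (hN : ∀ i, N ≤ i → p i = 0) :
    BddAbove {j | q j < p j} :=
  ⟨N, fun j hj => by
    by_contra hjN
    have := hN j (by omega)
    simp_all⟩

lemma le_of_sSup_setOf_lt_lt {q p : ℕ → ℕ} {N : ℕ} (hN : ∀ i, N ≤ i → p i = 0) {j : ℕ}
    (hj : sSup {j | q j < p j} < j) : p j ≤ q j :=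
  not_lt.mp fun hlt => notMem_of_csSup_lt hj (bddAbove_setOf_lt hN) hlt

lemma neg_le_nsmul_of_sum_range_nonneg {α : Type*} [AddCommGroup α] [LinearOrder α]
    [IsOrderedAddMonoid α] {D : ℕ → α} {c : α} {g k M : ℕ} (hlt : ∀ j < g, D j ≤ c)
    (hge : ∀ j, g ≤ j → D j ≤ 0) (hgk : g ≤ k) (hkM : k < M)
    (hsum : 0 ≤ ∑ j ∈ Finset.range M, D j) : -D k ≤ g • c := by
  obtain ⟨m, rfl⟩ := Nat.exists_eq_add_of_le (hgk.trans hkM.le)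
  rw [Finset.sum_range_add] at hsum
  have hhead : ∑ j ∈ Finset.range g, D j ≤ g • c := by
    simpa using Finset.sum_le_card_nsmul _ _ c fun j hj => hlt j (Finset.mem_range.mp hj)
  have htail : -D k ≤ ∑ j ∈ Finset.range m, -D (g + j) := by
    obtain ⟨l, rfl⟩ := Nat.exists_eq_add_of_le hgk
    exact Finset.single_le_sum (f := fun j => -D (g + j))
      (fun j _ => neg_nonneg.mpr (hge _ (Nat.le_add_right g j))) (Finset.mem_range.mpr (by omega))
  rw [Finset.sum_neg_distrib] at htail
  calc -D k ≤ -∑ j ∈ Finset.range m, D (g + j) := htail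
    _ ≤ ∑ j ∈ Finset.range g, D j := neg_le_iff_add_nonneg.mpr hsum
    _ ≤ g • c := hhead

lemma CMaj.sub_le_sSup {s1 s : ℕ → ℕ} (h : CMaj s1 s) {N1 N : ℕ}
    (hN1 : ∀ i, N1 ≤ i → s1 i = 0) (hN : ∀ i, N ≤ i → s i = 0)
    (hle : psum (ptail s1) ≤ psum (ptail s)) {i : ℕ} (hi : sSup {j | s1 j < s j} < i) :
    (s1 i : ℤ) - s i ≤ sSup {j | s1 j < s j} := by
  set g := sSup {j | s1 j < s j}
  set M := N1 + N + i
  rw [psum_eq_sum_range (p := ptail s1) (N := M) fun j hj => hN1 (j + 1) (by omega),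
    psum_eq_sum_range (p := ptail s) (N := M) fun j hj => hN (j + 1) (by omega)] at hle
  have hsum : 0 ≤ ∑ j ∈ Finset.range M, ((s (j + 1) : ℤ) - s1 (j + 1)) := by
    rw [Finset.sum_sub_distrib, sub_nonneg]
    exact_mod_cast hle
  have key := neg_le_nsmul_of_sum_range_nonneg (D := fun j => (s (j + 1) : ℤ) - s1 (j + 1))
    (c := 1) (g := g) (k := i - 1) (M := M)
    (fun j hj => by simp [h.2 (j + 1) hj])
    (fun j hj => by simp [le_of_sSup_setOf_lt_lt hN (show g < j + 1 by omega)])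
    (by omega) (by omega) hsum
  rw [Nat.sub_add_cancel (by omega)] at key
  simpa using key

/-- if `s_*^1 ∠ s_*` and `|s^1| ≤ |s|` (tails), then
`s_i − s_i^1 ≥ 1 − ⌊√(|s_*^1| + 1)⌋` for all `i ≥ 0`, where `|s_*^1|` is the
sum of all entries of `s_*^1` including the index-0 entry. -/
theorem cmaj_lower_bound_sqrt (s1 s : ℕ → ℕ) (hs1 : IsPartition s1)
    (hs : IsPartition s) (h : CMaj s1 s)
    (hle : psum (ptail s1) ≤ psum (ptail s)) :
    ∀ i, 1 - (Nat.sqrt (psum s1 + 1) : ℤ) ≤ (s i : ℤ) - (s1 i : ℤ) := by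
  intro i
  obtain ⟨N, hN⟩ := hs.2
  obtain ⟨N1, hN1⟩ := hs1.2
  set g := sSup {j | s1 j < s j}
  rcases le_or_gt i g with hig | hgi
  · have : 1 ≤ Nat.sqrt (psum s1 + 1) := Nat.le_sqrt.mpr (by omega)
    rw [h.2 i hig]
    push_cast
    omega
  · have hdg := h.sub_le_sSup hN1 hN hle hgi
    have hsi := le_of_sSup_setOf_lt_lt hN hgi
    obtain ⟨d, hd⟩ := Nat.exists_eq_add_of_le hsi
    have hdi : d + 1 ≤ i := by omega
    have hmul := hs1.succ_mul_le_psum i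
    have hsqrt : d + 1 ≤ Nat.sqrt (psum s1 + 1) :=
      Nat.le_sqrt.mpr (by nlinarith [Nat.mul_le_mul (Nat.le_add_left d (s i)) hdi])
    omega
end

section
/- Let r_* = (r_0, r_1, ...) and r_*^1 = (r_0^1, r_1^1, ...) be partitions such that r_* is conjugate-majorized by r_*^1 and |r^1| ≥ |r| − 1, where r = (r_1, r_2, ...) and r^1 = (r_1^1, r_2^1, ...). Then for all i ≥ 0, r_i − r_i^1 ≤ ⌊√|r|⌋. -/
/-- if `r_* ∠ r_*^1` and `|r^1| ≥ |r| − 1` (tails), then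
`r_i − r_i^1 ≤ ⌊√|r|⌋` for all `i ≥ 0`. -/
theorem cmaj_upper_bound_sqrt (r r1 : ℕ → ℕ) (hr : IsPartition r)
    (hr1 : IsPartition r1) (h : CMaj r r1)
    (hge : psum (ptail r) ≤ psum (ptail r1) + 1) :
    ∀ i, (r i : ℤ) - (r1 i : ℤ) ≤ (Nat.sqrt (psum (ptail r)) : ℤ) := by
  obtain ⟨hrm, Nr, hNr⟩ := hr
  obtain ⟨hr1m, Nr1, hNr1⟩ := hr1
  obtain ⟨h0, hg⟩ := h
  intro i
  have hsqrt0 : (0 : ℤ) ≤ (Nat.sqrt (psum (ptail r)) : ℤ) := Int.natCast_nonneg _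
  set S : Set ℕ := {j | r j < r1 j} with hS
  set g := sSup S with hgdef
  have hSb : ∀ j ∈ S, j ≤ Nr1 := by
    intro j hj
    by_contra hc
    push_neg at hc
    have hz := hNr1 j hc.le
    simp only [hS, Set.mem_setOf_eq, hz] at hj
    omega
  have hbdd : BddAbove S := ⟨Nr1, hSb⟩
  have hgt : ∀ j, g < j → r1 j ≤ r j := by
    intro j hj
    by_contra hc
    push_neg at hc
    exact absurd (le_csSup hbdd hc) (not_le.mpr hj)
  by_cases hig : i ≤ g
  · have hri : r1 i = r i + 1 := hg i hig
    have : (r i : ℤ) - (r1 i : ℤ) = -1 := by rw [hri]; push_cast; ring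
    rw [this]; linarith
  push_neg at hig
  by_cases hri : r i ≤ r1 i
  · have h1 : (r i : ℤ) - (r1 i : ℤ) ≤ 0 := by
      have : (r i : ℤ) ≤ (r1 i : ℤ) := by exact_mod_cast hri
      linarith
    linarith
  push_neg at hri
  -- now g < i and r1 i < r i
  set d := r i - r1 i with hd
  have hd' : r i = r1 i + d := by omega
  have hi1 : 1 ≤ i := by omega
  set N := max (max Nr Nr1) (max (g + 1) (i + 1)) with hN
  have hNrN : Nr ≤ N := le_trans (le_max_left _ _) (le_max_left _ _)
  have hNr1N : Nr1 ≤ N := le_trans (le_max_right _ _) (le_max_left _ _)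
  have hgN : g + 1 ≤ N := le_trans (le_max_left _ _) (le_max_right _ _)
  have hiN : i + 1 ≤ N := le_trans (le_max_right _ _) (le_max_right _ _)
  have hA : psum (ptail r) = ∑ j ∈ Finset.range N, r (j + 1) := by
    apply finsum_eq_sum_of_support_subset
    intro j hj
    simp only [Function.mem_support, ptail] at hj
    simp only [Finset.coe_range, Set.mem_Iio]
    by_contra hc
    push_neg at hc
    exact hj (hNr (j + 1) (by omega))
  have hB : psum (ptail r1) = ∑ j ∈ Finset.range N, r1 (j + 1) := by
    apply finsum_eq_sum_of_support_subset
    intro j hj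
    simp only [Function.mem_support, ptail] at hj
    simp only [Finset.coe_range, Set.mem_Iio]
    by_contra hc
    push_neg at hc
    exact hj (hNr1 (j + 1) (by omega))
  have hsplit : ∀ f : ℕ → ℕ, ∑ j ∈ Finset.range N, f (j + 1) =
      (∑ j ∈ Finset.Ico 0 g, f (j + 1)) + ∑ j ∈ Finset.Ico g N, f (j + 1) := by
    intro f
    rw [Finset.sum_Ico_consecutive _ (Nat.zero_le g) (by omega), Finset.range_eq_Ico]
  have hhead : ∑ j ∈ Finset.Ico 0 g, r1 (j + 1) =
      (∑ j ∈ Finset.Ico 0 g, r (j + 1)) + g := by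
    have : ∀ j ∈ Finset.Ico 0 g, r1 (j + 1) = r (j + 1) + 1 := by
      intro j hj
      simp only [Finset.mem_Ico] at hj
      exact hg (j + 1) (by omega)
    rw [Finset.sum_congr rfl this, Finset.sum_add_distrib]
    simp [Nat.Ico_zero_eq_range]
  have hmem : i - 1 ∈ Finset.Ico g N := by
    simp only [Finset.mem_Ico]; omega
  have hkey : (∑ j ∈ Finset.Ico g N, r1 (j + 1)) + d ≤ ∑ j ∈ Finset.Ico g N, r (j + 1) := by
    have heq : (∑ j ∈ Finset.Ico g N, r1 (j + 1)) + d =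
        ∑ j ∈ Finset.Ico g N, (r1 (j + 1) + if j = i - 1 then d else 0) := by
      rw [Finset.sum_add_distrib, Finset.sum_ite_eq' _ _ (fun _ => d), if_pos hmem]
    rw [heq]
    apply Finset.sum_le_sum
    intro j hj
    simp only [Finset.mem_Ico] at hj
    by_cases hji : j = i - 1
    · rw [if_pos hji, hji]
      have : i - 1 + 1 = i := by omega
      rw [this]
      omega
    · rw [if_neg hji]
      simp only [add_zero]
      exact hgt (j + 1) (by omega)
  have hdg : d ≤ g + 1 := by
    rw [hA, hsplit r] at hge
    rw [hB, hsplit r1, hhead] at hge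
    omega
  have hdi : d ≤ i := by omega
  have hir : i * r i ≤ ∑ j ∈ Finset.range i, r (j + 1) := by
    calc i * r i = ∑ _j ∈ Finset.range i, r i := by
          rw [Finset.sum_const, Finset.card_range, smul_eq_mul]
      _ ≤ ∑ j ∈ Finset.range i, r (j + 1) := by
          apply Finset.sum_le_sum
          intro j hj
          simp only [Finset.mem_range] at hj
          exact hrm (j + 1) i (by omega)
  have hsub : ∑ j ∈ Finset.range i, r (j + 1) ≤ ∑ j ∈ Finset.range N, r (j + 1) :=
    Finset.sum_le_sum_of_subset (Finset.range_subset_range.mpr (by omega))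
  have hdd : d * d ≤ psum (ptail r) := by
    calc d * d ≤ i * d := Nat.mul_le_mul_right d hdi
      _ ≤ i * r i := Nat.mul_le_mul_left i (by omega)
      _ ≤ ∑ j ∈ Finset.range i, r (j + 1) := hir
      _ ≤ ∑ j ∈ Finset.range N, r (j + 1) := hsub
      _ = psum (ptail r) := hA.symm
  have hds : d ≤ Nat.sqrt (psum (ptail r)) := Nat.le_sqrt.mpr hdd
  have : (r i : ℤ) - (r1 i : ℤ) = (d : ℤ) := by
    rw [hd']; push_cast; ring
  rw [this]
  exact_mod_cast hds
end

section
/- Let p_*, q_*, t_* be partitions with p_* ∠ q_* and p_* ∠ t_* (p_* is conjugate-majorized by both q_* and t_*), and suppose |t| ≤ |p| + 1, where lower-case letters without index 0 denote the tails (p_1, p_2, ...). Assume moreover that p_i ≤ q_i + 1 for all i ≥ 0 (which follows from q_* ∠-dominating p_*). If p ≠ (0, 0, ...) and |q| ≥ 1, then for all i ≥ 0, t_i − q_i ≤ ⌊√(|q| − 1)⌋ + 2. -/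
/-- if `p_* ∠ q_*`, `p_* ∠ t_*`, `|t| ≤ |p| + 1` (tails),
`p ≠ (0, 0, …)` (the tail of `p_*` is not identically zero),
`p_i ≤ q_i + 1` for all `i ≥ 0`, and `|q| ≥ 1`, then
`t_i − q_i ≤ ⌊√(|q| − 1)⌋ + 2` for all `i ≥ 0`. -/
theorem double_cmaj_upper_bound (p q t : ℕ → ℕ) (hp : IsPartition p)
    (hq : IsPartition q) (ht : IsPartition t)
    (hpq : CMaj p q) (hpt : CMaj p t)
    (htp : psum (ptail t) ≤ psum (ptail p) + 1)
    (hpne : ∃ i, ptail p i ≠ 0)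
    (hpq1 : ∀ i, p i ≤ q i + 1)
    (hq1 : 1 ≤ psum (ptail q)) :
    ∀ i, (t i : ℤ) - (q i : ℤ) ≤ (Nat.sqrt (psum (ptail q) - 1) : ℤ) + 2 := by
  intro i
  obtain ⟨N, hN⟩ := ht.2
  have hbdd : BddAbove {j | p j < t j} := by
    refine ⟨N, fun j hj => ?_⟩
    by_contra h
    push_neg at h
    have := hN j h.le
    simp only [Set.mem_setOf_eq] at hj
    omega
  have hs : (0:ℤ) ≤ (Nat.sqrt (psum (ptail q) - 1) : ℤ) := Int.natCast_nonneg _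
  have key : t i ≤ q i + 2 := by
    by_cases hi : i ≤ sSup {j | p j < t j}
    · have h1 := hpt.2 i hi
      have h2 := hpq1 i
      omega
    · have hle : t i ≤ p i := by
        by_contra h
        push_neg at h
        exact hi (le_csSup hbdd h)
      have h2 := hpq1 i
      omega
  have : (t i : ℤ) ≤ (q i : ℤ) + 2 := by exact_mod_cast key
  linarith
end

section
/- Let H(s) and H_1(s) be matrix pencils over an algebraically closed field, with H_1(s) of size (m−1)×n, H(s) of size m×n, equal ranks, and suppose H(s) is strictly equivalent to the pencil obtained by stacking a row pencil h(s) on top of H_1(s). If (W, r_*, s_*) and (W^1, r_*^1, s_*^1) are the Weyr characteristics of H(s) and H_1(s) respectively, then |s_*| ≥ |s_*^1| + 1. -/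
/-- Weyr data at each eigenvalue: a partition for every `λ` in the extended
field, nonzero for only finitely many `λ`. -/
def IsEigPartitions {Λ : Type*} (w : Λ → ℕ → ℕ) : Prop :=
  (∀ l, IsPartition (w l)) ∧ (Function.support w).Finite

/-- `|W|`: total sum over all eigenvalues of all entries of `w(λ)`. -/
noncomputable def wsum {Λ : Type*} (w : Λ → ℕ → ℕ) : ℕ := ∑ᶠ l, ∑ᶠ i, w l i

lemma psum_eq_range {p : ℕ → ℕ} {N : ℕ} (h : ∀ i, N ≤ i → p i = 0) :
    psum p = ∑ i ∈ Finset.range N, p i := by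
  apply finsum_eq_finset_sum_of_support_subset
  intro x hx
  simp only [Function.mem_support] at hx
  simp only [Finset.coe_range, Set.mem_Iio]
  by_contra hc
  exact hx (h x (le_of_not_gt hc))

lemma psum_split {p : ℕ → ℕ} (hp : IsPartition p) :
    psum p = p 0 + psum (ptail p) := by
  obtain ⟨N, hN⟩ := hp.2
  have h1 : psum p = ∑ i ∈ Finset.range (N + 1), p i :=
    psum_eq_range (fun i hi => hN i (le_trans (Nat.le_succ N) hi))
  have h2 : psum (ptail p) = ∑ i ∈ Finset.range N, p (i + 1) :=
    psum_eq_range (fun i hi => hN (i + 1) (le_trans hi (Nat.le_succ i)))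
  rw [h1, h2, Finset.sum_range_succ']
  ring

lemma inner_mono {a b : ℕ → ℕ} (ha : IsPartition a) (hb : IsPartition b)
    (hab : ∀ i, a i ≤ b i) : (∑ᶠ i, a i) ≤ ∑ᶠ i, b i := by
  obtain ⟨N, hN⟩ := ha.2
  obtain ⟨M, hM⟩ := hb.2
  have h1 : (∑ᶠ i, a i) = ∑ i ∈ Finset.range (max N M), a i :=
    psum_eq_range (fun i hi => hN i (le_trans (le_max_left N M) hi))
  have h2 : (∑ᶠ i, b i) = ∑ i ∈ Finset.range (max N M), b i :=
    psum_eq_range (fun i hi => hM i (le_trans (le_max_right N M) hi))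
  rw [h1, h2]
  exact Finset.sum_le_sum fun i _ => hab i

lemma wsum_mono {Λ : Type*} {w w1 : Λ → ℕ → ℕ}
    (hw : IsEigPartitions w) (hw1 : IsEigPartitions w1)
    (hab : ∀ l i, w l i ≤ w1 l i) : wsum w ≤ wsum w1 := by
  classical
  have hfin : ((Function.support w) ∪ (Function.support w1)).Finite :=
    hw.2.union hw1.2
  have key : ∀ (v : Λ → ℕ → ℕ), Function.support v ⊆
      Function.support w ∪ Function.support w1 →
      wsum v = ∑ l ∈ hfin.toFinset, ∑ᶠ i, v l i := by
    intro v hv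
    apply finsum_eq_finset_sum_of_support_subset
    intro x hx
    simp only [Function.mem_support] at hx
    have : v x ≠ 0 := by
      intro hc
      apply hx
      rw [hc]
      exact finsum_zero
    simp only [Set.Finite.coe_toFinset]
    exact hv this
  rw [key w Set.subset_union_left, key w1 Set.subset_union_right]
  exact Finset.sum_le_sum fun l _ => inner_mono (hw.1 l) (hw1.1 l) (hab l)

/-- STATEMENT 8: `H(s)` (Weyr characteristic `(W, r_*, s_*)`) is a one-row
completion of `H_1(s)` (Weyr characteristic `(W¹, r_*¹, s_*¹)`) of the same
rank.  Per the one-row completion characterization this means: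
`w_i(λ) ≤ w¹_i(λ) ≤ w_i(λ)+1` for all `i, λ`; `r_* = r_*¹`; `s_*¹ ∠ s_*`;
and rank equality gives `|W|+|r|+|s| = |W¹|+|r¹|+|s¹|`.
Conclusion: `|s_*| ≥ |s_*¹| + 1`. -/
theorem row_completion_eq_rank_s_star_sum {F : Type*} [Field F] [IsAlgClosed F]
    (w w1 : Option F → ℕ → ℕ) (r r1 s s1 : ℕ → ℕ)
    (hw : IsEigPartitions w) (hw1 : IsEigPartitions w1)
    (hr : IsPartition r) (hr1 : IsPartition r1)
    (hs : IsPartition s) (hs1 : IsPartition s1)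
    (hcomp : ∀ l i, w l i ≤ w1 l i ∧ w1 l i ≤ w l i + 1)
    (hreq : r = r1)
    (hsmaj : CMaj s1 s)
    (hrank : wsum w + psum (ptail r) + psum (ptail s) =
             wsum w1 + psum (ptail r1) + psum (ptail s1)) :
    psum s1 + 1 ≤ psum s := by
  have hwle : wsum w ≤ wsum w1 := wsum_mono hw hw1 (fun l i => (hcomp l i).1)
  have htail : psum (ptail s1) ≤ psum (ptail s) := by
    rw [hreq] at hrank; omega
  have h0 : s 0 = s1 0 + 1 := hsmaj.1
  rw [psum_split hs, psum_split hs1, h0]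
  omega
end

section
/- Let H(s) ∈ F[s]^{m×n} be a matrix pencil of rank ρ over an algebraically closed field F with Weyr characteristic (W, r_*, s_*), where s_0 ≥ 1, and let u = (u_1, u_2, ...) be the conjugate partition of s = (s_1, s_2, ...). Let w^1(λ) be partitions for λ ∈ F ∪ {∞} with finite support. Then there exist pencils H_1(s) ∈ F[s]^{(m−1)×n} and h(s) ∈ F[s]^{1×n} such that H(s) is strictly equivalent to the stacking of h(s) on H_1(s), rank(H_1(s)) = rank(H(s)), and W^1 is the Weyr characteristic of the regular part of H_1(s), if and only if: w_i(λ) ≤ w^1_i(λ) ≤ w_i(λ) + 1 for all i ≥ 1 and λ; s_0 ≥ 1; and (if s_0 = 1 then |W^1| − |W| = u_1, while if s_0 > 1 then |W^1| − |W| = u_1 or |W^1| − |W| ≤ u_2). -/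
lemma psum_eq (p : ℕ → ℕ) (N : ℕ) (h : ∀ i, N ≤ i → p i = 0) :
    psum p = ∑ i ∈ Finset.range N, p i := by
  apply finsum_eq_sum_of_support_subset
  intro i hi
  simp only [Function.mem_support] at hi
  simp only [Finset.coe_range, Set.mem_Iio]
  by_contra hc
  exact hi (h i (le_of_not_gt hc))

lemma conj_lt_iff (p : ℕ → ℕ) (hp : IsPartition p) (k i : ℕ) :
    i < conjPart p k ↔ k + 1 ≤ p i := by
  obtain ⟨hmono, N, hN⟩ := hp
  set S : Set ℕ := {i | k + 1 ≤ p i} with hS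
  have hfin : S.Finite := by
    apply Set.Finite.subset (Set.finite_Iio N)
    intro j hj
    simp only [hS, Set.mem_setOf_eq] at hj
    simp only [Set.mem_Iio]
    by_contra hc
    rw [hN j (le_of_not_gt hc)] at hj; omega
  have hcard : conjPart p k = S.ncard := by
    rw [conjPart, Nat.card_coe_set_eq]
  constructor
  · intro hlt
    by_contra hc
    have hsub : S ⊆ Set.Iio i := by
      intro j hj
      simp only [hS, Set.mem_setOf_eq] at hj
      simp only [Set.mem_Iio]
      by_contra hc2
      exact hc (hj.trans (hmono i j (le_of_not_gt hc2)))
    have := Set.ncard_le_ncard hsub (Set.finite_Iio i)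
    rw [show (Set.Iio i).ncard = i by rw [Set.ncard_eq_toFinset_card']; simp] at this
    omega
  · intro hmem
    have hsub : Set.Iic i ⊆ S := by
      intro j hj
      simp only [Set.mem_Iic] at hj
      exact hmem.trans (hmono j i hj)
    have := Set.ncard_le_ncard hsub hfin
    rw [show (Set.Iic i).ncard = i + 1 by rw [Set.ncard_eq_toFinset_card']; simp] at this
    omega

lemma ind_sum (m N : ℕ) (h : m ≤ N) :
    ∑ i ∈ Finset.range N, (if i < m then (1:ℕ) else 0) = m := by
  rw [Finset.sum_ite, Finset.sum_const, Finset.sum_const]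
  have : (Finset.range N).filter (fun i => i < m) = Finset.range m := by
    ext i; simp; omega
  rw [this]; simp

lemma ind_sum_ico (a b N : ℕ) (h : b ≤ N) (hab : a ≤ b) :
    ∑ i ∈ Finset.range N, (if a ≤ i ∧ i < b then (1:ℕ) else 0) = b - a := by
  rw [Finset.sum_ite, Finset.sum_const, Finset.sum_const]
  have : (Finset.range N).filter (fun i => a ≤ i ∧ i < b) = Finset.Ico a b := by
    ext i; simp; omega
  rw [this]; simp

lemma core_bwd (s : ℕ → ℕ) (hs : IsPartition s) (hs0 : 1 ≤ s 0) (A B : ℕ) :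
    ((s 0 = 1 → B = A + conjPart (ptail s) 0) ∧
     (1 < s 0 → B = A + conjPart (ptail s) 0 ∨ B ≤ A + conjPart (ptail s) 1)) →
    (∃ s1, IsPartition s1 ∧ CMaj s1 s ∧ B + psum (ptail s1) = A + psum (ptail s)) := by
  obtain ⟨hmono, N, hN⟩ := hs
  set u1 := conjPart (ptail s) 0 with hu1def
  set u2 := conjPart (ptail s) 1 with hu2def
  have hpt : IsPartition (ptail s) :=
    ⟨fun i j hij => hmono (i+1) (j+1) (by omega), ⟨N, fun i hi => hN (i+1) (by omega)⟩⟩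
  have hm1 : ∀ i, i < u1 ↔ 1 ≤ s (i+1) := fun i => conj_lt_iff (ptail s) hpt 0 i
  have hm2 : ∀ i, i < u2 ↔ 2 ≤ s (i+1) := fun i => conj_lt_iff (ptail s) hpt 1 i
  have hm1' : ∀ j, 1 ≤ j → (j ≤ u1 ↔ 1 ≤ s j) := by
    intro j hj; have := hm1 (j-1); rw [Nat.sub_add_cancel hj] at this; omega
  have hm2' : ∀ j, 1 ≤ j → (j ≤ u2 ↔ 2 ≤ s j) := by
    intro j hj; have := hm2 (j-1); rw [Nat.sub_add_cancel hj] at this; omega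
  have hu21 : u2 ≤ u1 := by
    by_contra hc
    have h1 := (hm2 u1).mp (by omega)
    have h2 := (hm1 u1).mpr (by omega)
    omega
  have hu1N : u1 ≤ N := by
    rcases Nat.eq_zero_or_pos u1 with h | h
    · omega
    · have := (hm1 (u1 - 1)).mp (by omega)
      by_contra hc
      have := hN (u1 - 1 + 1) (by omega)
      omega
  have hP : psum (ptail s) = ∑ i ∈ Finset.range N, s (i+1) :=
    psum_eq _ N (fun i hi => hN (i+1) (by omega))
  -- construction 1
  have hC1 : B = A + u1 →
      ∃ s1, IsPartition s1 ∧ CMaj s1 s ∧ B + psum (ptail s1) = A + psum (ptail s) := by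
    intro hB
    refine ⟨fun i => s i - 1,
      ⟨fun i j hij => by have := hmono i j hij; simp only; omega,
       ⟨N, fun i hi => by have := hN i hi; simp only; omega⟩⟩, ⟨by simp only; omega, ?_⟩, ?_⟩
    · intro i hi
      beta_reduce at hi
      beta_reduce
      have hbdd : ∀ j ∈ {j | s j - 1 < s j}, j ≤ u1 := by
        intro j hj
        simp only [Set.mem_setOf_eq] at hj
        rcases Nat.eq_zero_or_pos j with h | h
        · omega
        · have := (hm1' j h).mpr (by omega); omega
      have h0 : (0:ℕ) ∈ {j | s j - 1 < s j} := by
        simp only [Set.mem_setOf_eq]; omega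
      have hmem := Nat.sSup_mem ⟨0, h0⟩ ⟨u1, hbdd⟩
      simp only [Set.mem_setOf_eq] at hmem
      have := hmono i _ hi
      omega
    · have hQ : psum (ptail (fun i => s i - 1)) = ∑ i ∈ Finset.range N, (s (i+1) - 1) :=
        psum_eq _ N (fun i hi => by have := hN (i+1) (by omega); simp only [ptail]; omega)
      have key : ∑ i ∈ Finset.range N, ((s (i+1) - 1) + (if i < u1 then 1 else 0)) =
          ∑ i ∈ Finset.range N, s (i+1) := by
        apply Finset.sum_congr rfl
        intro i _
        have := hm1 i
        split_ifs <;> omega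
      rw [Finset.sum_add_distrib, ind_sum u1 N hu1N] at key
      omega
  rintro ⟨h1, h2⟩
  by_cases hs01 : s 0 = 1
  · exact hC1 (h1 hs01)
  · have hs0' : 1 < s 0 := by omega
    rcases h2 hs0' with hB | hB
    · exact hC1 hB
    · -- construction 2
      set K := A + u2 - B with hK
      have hbig : ∀ i, i ≤ u2 → 2 ≤ s i := by
        intro i hi
        rcases Nat.eq_zero_or_pos i with rfl | h
        · omega
        · exact (hm2' i h).mp hi
      set M := N + u1 + K + 1 with hM
      refine ⟨fun i => if i ≤ u2 then s i - 1 else if i ≤ u1 + K then 1 else 0,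
        ⟨?_, ⟨u1 + K + 1, fun i hi => by
          simp only
          rw [if_neg (by omega), if_neg (by omega)]⟩⟩, ⟨?_, ?_⟩, ?_⟩
      · -- monotone
        intro i j hij
        have hsij := hmono i j hij
        by_cases hj2 : j ≤ u2
        · have hi2 : i ≤ u2 := le_trans hij hj2
          simp only [if_pos hj2, if_pos hi2]; omega
        · by_cases hi2 : i ≤ u2
          · have h2i := hbig i hi2
            simp only [if_neg hj2, if_pos hi2]
            split_ifs <;> omega
          · simp only [if_neg hj2, if_neg hi2]
            split_ifs <;> omega
      · -- CMaj first
        simp only [if_pos (Nat.zero_le u2)]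
        omega
      · -- CMaj second
        intro i hi
        have hset : {j | (if j ≤ u2 then s j - 1 else if j ≤ u1 + K then 1 else 0) < s j}
            = Set.Iic u2 := by
          ext j
          simp only [Set.mem_setOf_eq, Set.mem_Iic]
          constructor
          · intro hjT
            by_contra hc
            push_neg at hc
            have hj1 : 1 ≤ j := by omega
            rw [if_neg (by omega)] at hjT
            have e1 := hm1' j hj1
            have e2 := hm2' j hj1
            split_ifs at hjT <;> omega
          · intro hj
            rw [if_pos hj]
            have := hbig j hj
            omega
        rw [hset, csSup_Iic] at hi
        simp only [if_pos hi]
        have := hbig i hi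
        omega
      · -- equation
        have hPM : psum (ptail s) = ∑ i ∈ Finset.range M, s (i+1) :=
          psum_eq _ M (fun i hi => hN (i+1) (by omega))
        have hQ : psum (ptail (fun i => if i ≤ u2 then s i - 1 else if i ≤ u1 + K then 1 else 0))
            = ∑ i ∈ Finset.range M,
              (if i+1 ≤ u2 then s (i+1) - 1 else if i+1 ≤ u1 + K then 1 else 0) := by
          apply psum_eq
          intro i hi
          simp only [ptail]
          rw [if_neg (by omega), if_neg (by omega)]
        have key : ∀ i ∈ Finset.range M,
            (if i+1 ≤ u2 then s (i+1) - 1 else if i+1 ≤ u1 + K then 1 else 0)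
              + (if i < u2 then 1 else 0)
            = s (i+1) + (if u1 ≤ i ∧ i < u1 + K then 1 else 0) := by
          intro i _
          have e1 := hm1 i
          have e2 := hm2 i
          split_ifs <;> omega
        have hsum := Finset.sum_congr rfl key
        rw [Finset.sum_add_distrib, Finset.sum_add_distrib,
          ind_sum u2 M (by omega), ind_sum_ico u1 (u1+K) M (by omega) (by omega)] at hsum
        rw [hQ, hPM]
        omega

lemma core (s : ℕ → ℕ) (hs : IsPartition s) (hs0 : 1 ≤ s 0) (A B : ℕ) :
    (∃ s1, IsPartition s1 ∧ CMaj s1 s ∧ B + psum (ptail s1) = A + psum (ptail s)) ↔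
    ((s 0 = 1 → B = A + conjPart (ptail s) 0) ∧
     (1 < s 0 → B = A + conjPart (ptail s) 0 ∨ B ≤ A + conjPart (ptail s) 1)) := by
  obtain ⟨hmono, N, hN⟩ := hs
  set u1 := conjPart (ptail s) 0 with hu1def
  set u2 := conjPart (ptail s) 1 with hu2def
  have hpt : IsPartition (ptail s) :=
    ⟨fun i j hij => hmono (i+1) (j+1) (by omega), ⟨N, fun i hi => hN (i+1) (by omega)⟩⟩
  have hm1 : ∀ i, i < u1 ↔ 1 ≤ s (i+1) := fun i => conj_lt_iff (ptail s) hpt 0 i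
  have hm2 : ∀ i, i < u2 ↔ 2 ≤ s (i+1) := fun i => conj_lt_iff (ptail s) hpt 1 i
  have hu21 : u2 ≤ u1 := by
    by_contra hc
    have h1 := (hm2 u1).mp (by omega)
    have h2 := (hm1 u1).mpr (by omega)
    omega
  have hu1N : u1 ≤ N := by
    rcases Nat.eq_zero_or_pos u1 with h | h
    · omega
    · have := (hm1 (u1 - 1)).mp (by omega)
      by_contra hc
      have := hN (u1 - 1 + 1) (by omega)
      omega
  have hP : psum (ptail s) = ∑ i ∈ Finset.range N, s (i+1) :=
    psum_eq _ N (fun i hi => hN (i+1) (by omega))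
  constructor
  · rintro ⟨s1, ⟨hmono1, N1, hN1⟩, ⟨hcm0, hcm⟩, heq⟩
    set T : Set ℕ := {j | s1 j < s j} with hT
    have h0T : (0:ℕ) ∈ T := by simp only [hT, Set.mem_setOf_eq]; omega
    have hTbdd : ∀ j ∈ T, j ≤ u1 := by
      intro j hj
      simp only [hT, Set.mem_setOf_eq] at hj
      rcases Nat.eq_zero_or_pos j with h | h
      · omega
      · have := (hm1 (j-1)).mpr (by rw [Nat.sub_add_cancel h]; omega)
        omega
    set g := sSup T with hg
    have hgu1 : g ≤ u1 := csSup_le ⟨0, h0T⟩ hTbdd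
    have hgT : g ∈ T := Nat.sSup_mem ⟨0, h0T⟩ ⟨u1, hTbdd⟩
    have hle : ∀ i ≤ g, s i = s1 i + 1 := fun i hi => hcm i hi
    have hgt : ∀ j, g < j → s j ≤ s1 j := by
      intro j hj
      by_contra hc
      have : j ∈ T := by simp only [hT, Set.mem_setOf_eq]; omega
      have := le_csSup ⟨u1, hTbdd⟩ this
      omega
    by_cases hs01 : s 0 = 1
    · -- s 0 = 1 case : s1 ≡ 0
      have hz : ∀ i, s1 i = 0 := by
        intro i
        have := hmono1 0 i (Nat.zero_le i)
        omega
      have hQ1 : psum (ptail s1) = 0 := by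
        rw [psum_eq (ptail s1) 0 (fun i _ => hz (i+1))]; simp
      have hPval : psum (ptail s) = u1 := by
        rw [hP, ← ind_sum u1 N hu1N]
        apply Finset.sum_congr rfl
        intro i _
        have h1 := hm1 i
        have h2 := hmono 0 (i+1) (by omega)
        split_ifs with h <;> omega
      constructor
      · intro _; omega
      · intro h; omega
    · -- s 0 > 1 case
      have hs0' : 1 < s 0 := by omega
      set M := N + N1 + g + u1 + 1 with hM
      have hPM : psum (ptail s) = ∑ i ∈ Finset.range M, s (i+1) :=
        psum_eq _ M (fun i hi => hN (i+1) (by omega))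
      have hQM : psum (ptail s1) = ∑ i ∈ Finset.range M, s1 (i+1) :=
        psum_eq _ M (fun i hi => hN1 (i+1) (by omega))
      -- split sums at g
      have hsplitP : ∑ i ∈ Finset.range M, s (i+1) =
          ∑ i ∈ Finset.Ico 0 g, s (i+1) + ∑ i ∈ Finset.Ico g M, s (i+1) := by
        rw [Finset.range_eq_Ico, Finset.sum_Ico_consecutive _ (Nat.zero_le g) (by omega)]
      have hsplitQ : ∑ i ∈ Finset.range M, s1 (i+1) =
          ∑ i ∈ Finset.Ico 0 g, s1 (i+1) + ∑ i ∈ Finset.Ico g M, s1 (i+1) := by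
        rw [Finset.range_eq_Ico, Finset.sum_Ico_consecutive _ (Nat.zero_le g) (by omega)]
      have hhead : ∑ i ∈ Finset.Ico 0 g, s (i+1) =
          ∑ i ∈ Finset.Ico 0 g, s1 (i+1) + g := by
        have : ∀ i ∈ Finset.Ico 0 g, s (i+1) = s1 (i+1) + 1 := by
          intro i hi
          simp only [Finset.mem_Ico] at hi
          exact hle (i+1) (by omega)
        rw [Finset.sum_congr rfl this, Finset.sum_add_distrib, Finset.sum_const]
        simp
      constructor
      · intro h; omega
      · intro _
        by_cases hall : ∀ j, g < j → s1 j = s j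
        · -- tails equal
          have htail : ∑ i ∈ Finset.Ico g M, s (i+1) = ∑ i ∈ Finset.Ico g M, s1 (i+1) := by
            apply Finset.sum_congr rfl
            intro i hi
            simp only [Finset.mem_Ico] at hi
            exact (hall (i+1) (by omega)).symm
          have hBg : B = A + g := by omega
          by_cases hgu : g = u1
          · left; omega
          · right
            have hgu2 : g ≤ u2 := by
              rcases Nat.eq_zero_or_pos g with h | h
              · omega
              · have h1 : 1 ≤ s (g+1) := (hm1 g).mp (by omega)
                have h2 : s (g+1) ≤ s1 (g+1) := hgt (g+1) (by omega)
                have h3 : s1 (g+1) ≤ s1 g := hmono1 g (g+1) (by omega)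
                have h4 : s g = s1 g + 1 := hle g le_rfl
                have := (hm2 (g-1)).mpr (by rw [Nat.sub_add_cancel h]; omega)
                omega
            omega
        · -- some tail entry strictly bigger
          push_neg at hall
          obtain ⟨j0, hj0g, hj0ne⟩ := hall
          have hj0lt : s j0 < s1 j0 := lt_of_le_of_ne (hgt j0 hj0g) (fun h => hj0ne h.symm)
          have hj0M : j0 < M := by
            by_contra hc
            have := hN1 j0 (by omega)
            omega
          have htail : ∑ i ∈ Finset.Ico g M, s (i+1) < ∑ i ∈ Finset.Ico g M, s1 (i+1) := by
            apply Finset.sum_lt_sum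
            · intro i hi
              simp only [Finset.mem_Ico] at hi
              exact hgt (i+1) (by omega)
            · refine ⟨j0 - 1, ?_, ?_⟩
              · simp only [Finset.mem_Ico]; omega
              · rw [Nat.sub_add_cancel (by omega)]; exact hj0lt
          right
          have hgu2 : g = 0 ∨ g ≤ u2 := by
            rcases Nat.eq_zero_or_pos g with h | h
            · left; exact h
            · right
              have h2 : 1 ≤ s1 j0 := by omega
              have h3 : s1 j0 ≤ s1 g := hmono1 g j0 (by omega)
              have h4 : s g = s1 g + 1 := hle g le_rfl
              have := (hm2 (g-1)).mpr (by rw [Nat.sub_add_cancel h]; omega)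
              omega
          omega
  · exact core_bwd s ⟨hmono, N, hN⟩ hs0 A B

/-- STATEMENT 14: `H(s)` has Weyr characteristic `(W, r_*, s_*)` with
`s_0 ≥ 1`, and `u` is the conjugate partition of `s = (s_1, s_2, …)`.
The existence of pencils `H_1(s)`, `h(s)` with `H(s)` strictly equivalent to
stacking `h(s)` on `H_1(s)`, `rank H_1 = rank H`, and `W¹` the Weyr
characteristic of the regular part of `H_1(s)`, is (by the equal-rank one-row
completion characterization together with the existence of pencils with
prescribed Weyr characteristic) the existence of partitions `r_*¹, s_*¹`
completing `W¹` to an admissible Weyr characteristic of such a subpencil.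
This holds iff: `w_i(λ) ≤ w¹_i(λ) ≤ w_i(λ)+1`; `s_0 ≥ 1`; and
(if `s_0 = 1` then `|W¹| − |W| = u_1`, while if `s_0 > 1` then
`|W¹| − |W| = u_1` or `|W¹| − |W| ≤ u_2`). -/
theorem prescribed_regular_part_subpencil_iff {F : Type*} [Field F] [IsAlgClosed F]
    (w w1 : Option F → ℕ → ℕ) (r s : ℕ → ℕ)
    (hw : IsEigPartitions w) (hw1 : IsEigPartitions w1)
    (hr : IsPartition r) (hs : IsPartition s)
    (hs0 : 1 ≤ s 0) :
    (∃ r1 s1 : ℕ → ℕ, IsPartition r1 ∧ IsPartition s1 ∧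
        (∀ l i, w l i ≤ w1 l i ∧ w1 l i ≤ w l i + 1) ∧
        r1 = r ∧ CMaj s1 s ∧
        wsum w1 + psum (ptail r1) + psum (ptail s1) =
          wsum w + psum (ptail r) + psum (ptail s)) ↔
    ((∀ l i, w l i ≤ w1 l i ∧ w1 l i ≤ w l i + 1) ∧
     1 ≤ s 0 ∧
     (s 0 = 1 → wsum w1 = wsum w + conjPart (ptail s) 0) ∧
     (1 < s 0 → wsum w1 = wsum w + conjPart (ptail s) 0 ∨
                wsum w1 ≤ wsum w + conjPart (ptail s) 1)) := by
  have hcore := core s hs hs0 (wsum w) (wsum w1)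
  constructor
  · rintro ⟨r1, s1, hr1, hs1, hwc, rfl, hcm, heq⟩
    have h := hcore.mp ⟨s1, hs1, hcm, by omega⟩
    exact ⟨hwc, hs0, h.1, h.2⟩
  · rintro ⟨hwc, -, hc1, hc2⟩
    obtain ⟨s1, hs1, hcm, heq⟩ := hcore.mpr ⟨hc1, hc2⟩
    exact ⟨r, s1, hr, hs1, hwc, rfl, hcm, by omega⟩
end

section
/- Let H_1(s) ∈ F[s]^{(m−1)×n} be a matrix pencil over an algebraically closed field F with Weyr characteristic (W^1, r_*^1, s_*^1), and for λ ∈ F ∪ {∞} let z_1^1(λ) = #{i ≥ 1 : w^1_i(λ) ≥ 1}. Let s_* be a partition. There exist pencils H(s) ∈ F[s]^{m×n} and h(s) ∈ F[s]^{1×n} with H(s) strictly equivalent to stacking h(s) on H_1(s), rank(H(s)) = rank(H_1(s)), and s_* the row Brunovsky partition of H(s), if and only if s_*^1 is conjugate-majorized by s_* and 0 ≤ |s| − |s^1| ≤ Σ_λ z_1^1(λ). -/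
open Function

lemma support_subset_of_le {α M : Type*} [AddMonoid M] [PartialOrder M] [CanonicallyOrderedAdd M]
    {f g : α → M} (h : f ≤ g) : support f ⊆ support g :=
  fun a ha hga => ha (nonpos_iff_eq_zero.1 (hga ▸ h a))

lemma conjPart_zero_eq_ncard_support (p : ℕ → ℕ) : conjPart p 0 = (support p).ncard := by
  simp only [conjPart, Nat.card_coe_set_eq, zero_add, Nat.one_le_iff_ne_zero]
  rfl

lemma IsPartition.support_finite {p : ℕ → ℕ} (hp : IsPartition p) : (support p).Finite := by
  obtain ⟨-, N, hN⟩ := hp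
  exact (Set.finite_Iio N).subset fun i hi => by_contra fun hiN => hi (hN i (not_lt.1 hiN))

lemma IsPartition.pos_iff_lt_conjPart {p : ℕ → ℕ} (hp : IsPartition p) (i : ℕ) :
    0 < p i ↔ i < conjPart p 0 := by
  rw [conjPart_zero_eq_ncard_support]
  constructor
  · intro hpi
    have hsub : Set.Iic i ⊆ support p := fun j hj => (hpi.trans_le (hp.1 j i hj)).ne'
    have := Set.ncard_le_ncard hsub hp.support_finite
    rw [Set.ncard_Iic_nat] at this
    omega
  · intro hlt
    by_contra! hpi
    have hsub : support p ⊆ Set.Iio i := fun j hj => by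
      by_contra! hij
      exact hj (Nat.eq_zero_of_le_zero ((hp.1 i j (not_lt.1 hij)).trans hpi))
    have := Set.ncard_le_ncard hsub (Set.finite_Iio i)
    rw [Set.ncard_Iio_nat] at this
    omega

lemma finsum_eq_finsum_add_ncard {α : Type*} {p q : α → ℕ} (hp : (support p).Finite)
    (hqp : q ≤ p) (hpq : p ≤ q + 1) :
    ∑ᶠ a, p a = ∑ᶠ a, q a + {a | q a < p a}.ncard := by
  set s := {a | q a < p a}
  have hs : s ⊆ support p := fun a ha => Nat.ne_zero_of_lt ha
  have hsplit : ∀ a, p a = q a + s.indicator (fun _ => 1) a := fun a => by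
    by_cases ha : a ∈ s
    · rw [Set.indicator_of_mem ha]
      exact le_antisymm (hpq a) ha
    · rw [Set.indicator_of_notMem ha, add_zero]
      exact le_antisymm (not_lt.1 ha) (hqp a)
  calc ∑ᶠ a, p a = ∑ᶠ a, (q a + s.indicator (fun _ => 1) a) := finsum_congr hsplit
    _ = ∑ᶠ a, q a + ∑ᶠ a ∈ s, 1 := by
      rw [finsum_add_distrib (hp.subset (support_subset_of_le hqp))
        ((hp.subset hs).subset Set.support_indicator_subset), finsum_mem_def]
    _ = ∑ᶠ a, q a + s.ncard := by rw [finsum_one]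

lemma exists_le_finsum_eq {α : Type*} {c : α → ℕ} (hc : (support c).Finite) :
    ∀ d ≤ ∑ᶠ a, c a, ∃ k ≤ c, ∑ᶠ a, k a = d := by
  classical
  intro d
  induction d with
  | zero => exact fun _ => ⟨0, fun _ => Nat.zero_le _, by simp⟩
  | succ d ih =>
    intro hd
    obtain ⟨k, hkc, hk⟩ := ih (Nat.le_of_succ_le hd)
    have hkfin := hc.subset (support_subset_of_le hkc)
    obtain ⟨a, ha⟩ : ∃ a, k a < c a := by
      by_contra! hck
      have := finsum_le_finsum' hc hkfin hck
      omega
    refine ⟨k + Pi.single a 1, fun b => ?_, ?_⟩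
    · rcases eq_or_ne b a with rfl | hb
      · simpa using ha
      · simpa [hb] using hkc b
    · simp only [Pi.add_apply]
      rw [finsum_add_distrib hkfin ((Set.finite_singleton a).subset Pi.support_single_subset),
        finsum_eq_single (Pi.single a 1) a fun b hb => Pi.single_eq_of_ne hb _, hk,
        Pi.single_eq_same]

lemma finsum_le_finsum_add_conjPart {p q : ℕ → ℕ} (hp : (support p).Finite)
    (hqp : q ≤ p) (hpq : p ≤ q + 1) :
    ∑ᶠ i, p i ≤ ∑ᶠ i, q i + conjPart p 0 := by
  rw [finsum_eq_finsum_add_ncard hp hqp hpq, conjPart_zero_eq_ncard_support]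
  exact Nat.add_le_add_left (Set.ncard_le_ncard (fun i hi => Nat.ne_zero_of_lt hi) hp) _

lemma IsPartition.exists_lower_finsum_eq {p : ℕ → ℕ} (hp : IsPartition p) {k : ℕ}
    (hk : k ≤ conjPart p 0) :
    ∃ q, IsPartition q ∧ q ≤ p ∧ p ≤ q + 1 ∧ ∑ᶠ i, p i = ∑ᶠ i, q i + k := by
  set c := conjPart p 0
  -- Lower the parts with index in `[c - k, c)`; beyond `c` the parts are already `0`.
  set q : ℕ → ℕ := fun i => p i - if c - k ≤ i then 1 else 0
  have hqp : q ≤ p := fun i => Nat.sub_le _ _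
  have hpq : p ≤ q + 1 := fun i => by
    change p i ≤ p i - _ + 1
    split_ifs <;> omega
  have hq : IsPartition q := by
    refine ⟨fun i j hij => ?_, ?_⟩
    · have := hp.1 i j hij
      change p j - _ ≤ p i - _
      split_ifs <;> omega
    · obtain ⟨N, hN⟩ := hp.2
      exact ⟨N, fun i hi => Nat.eq_zero_of_le_zero (hN i hi ▸ hqp i)⟩
  have hlowered : {i | q i < p i} = Set.Ico (c - k) c := by
    ext i
    have := hp.pos_iff_lt_conjPart i
    change p i - _ < p i ↔ c - k ≤ i ∧ i < c
    split_ifs <;> omega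
  refine ⟨q, hq, hqp, hpq, ?_⟩
  rw [finsum_eq_finsum_add_ncard hp.support_finite hqp hpq, hlowered, Set.ncard_Ico_nat,
    Nat.sub_sub_self hk]

section Weyr

variable {Λ : Type*}

lemma support_finsum_subset (w : Λ → ℕ → ℕ) :
    support (fun l => ∑ᶠ i, w l i) ⊆ support w :=
  support_comp_subset (g := fun p : ℕ → ℕ => ∑ᶠ i, p i) (by simp) w

lemma support_conjPart_zero_subset (w : Λ → ℕ → ℕ) :
    support (fun l => conjPart (w l) 0) ⊆ support w :=
  support_comp_subset (g := fun p => conjPart p 0)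
    (by simp [conjPart_zero_eq_ncard_support]) w

lemma wsum_le_wsum {w w1 : Λ → ℕ → ℕ} (hw1 : IsEigPartitions w1) (h : w ≤ w1) :
    wsum w ≤ wsum w1 := by
  have hw1fin := hw1.2.subset (support_finsum_subset w1)
  have hstep : ∀ l, ∑ᶠ i, w l i ≤ ∑ᶠ i, w1 l i := fun l =>
    finsum_le_finsum' ((hw1.1 l).support_finite.subset (support_subset_of_le (h l)))
      (hw1.1 l).support_finite (h l)
  exact finsum_le_finsum' (hw1fin.subset (support_subset_of_le hstep)) hw1fin hstep

lemma wsum_le_wsum_add_conjPart {w w1 : Λ → ℕ → ℕ} (hw1 : IsEigPartitions w1)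
    (hw : w ≤ w1) (hw1w : w1 ≤ w + 1) :
    wsum w1 ≤ wsum w + ∑ᶠ l, conjPart (w1 l) 0 := by
  have hwfin := hw1.2.subset ((support_finsum_subset w).trans (support_subset_of_le hw))
  have hcfin := hw1.2.subset (support_conjPart_zero_subset w1)
  have hstep : ∀ l, ∑ᶠ i, w1 l i ≤ ∑ᶠ i, w l i + conjPart (w1 l) 0 := fun l =>
    finsum_le_finsum_add_conjPart (hw1.1 l).support_finite (hw l) (hw1w l)
  calc wsum w1 ≤ ∑ᶠ l, (∑ᶠ i, w l i + conjPart (w1 l) 0) :=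
        finsum_le_finsum' (hw1.2.subset (support_finsum_subset w1))
          ((hwfin.union hcfin).subset (support_add _ _)) hstep
    _ = wsum w + ∑ᶠ l, conjPart (w1 l) 0 := finsum_add_distrib hwfin hcfin

lemma IsEigPartitions.exists_lower_wsum_eq {w1 : Λ → ℕ → ℕ} (hw1 : IsEigPartitions w1)
    {d : ℕ} (hd : d ≤ ∑ᶠ l, conjPart (w1 l) 0) :
    ∃ w, IsEigPartitions w ∧ w ≤ w1 ∧ w1 ≤ w + 1 ∧ wsum w1 = wsum w + d := by
  obtain ⟨k, hkc, hk⟩ :=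
    exists_le_finsum_eq (hw1.2.subset (support_conjPart_zero_subset w1)) d hd
  choose w hw hwle hlew hsum using fun l => (hw1.1 l).exists_lower_finsum_eq (hkc l)
  have hwfin : (support w).Finite := hw1.2.subset (support_subset_of_le hwle)
  refine ⟨w, ⟨hw, hwfin⟩, hwle, hlew, ?_⟩
  calc wsum w1 = ∑ᶠ l, (∑ᶠ i, w l i + k l) := finsum_congr hsum
    _ = wsum w + d := by
      rw [finsum_add_distrib (hwfin.subset (support_finsum_subset w))
        (hw1.2.subset ((support_subset_of_le hkc).trans (support_conjPart_zero_subset w1))), hk]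
      rfl

end Weyr

theorem prescribed_row_brunovsky_completion_iff_general
    {F : Type*}
    (w1 : Option F → ℕ → ℕ) (r1 s1 s : ℕ → ℕ)
    (hw1 : IsEigPartitions w1) (hr1 : IsPartition r1) :
    (∃ w : Option F → ℕ → ℕ, ∃ r : ℕ → ℕ,
        IsEigPartitions w ∧ IsPartition r ∧
        (∀ l i, w l i ≤ w1 l i ∧ w1 l i ≤ w l i + 1) ∧
        r = r1 ∧ CMaj s1 s ∧
        wsum w + psum (ptail r) + psum (ptail s) =
          wsum w1 + psum (ptail r1) + psum (ptail s1)) ↔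
    (CMaj s1 s ∧
     psum (ptail s1) ≤ psum (ptail s) ∧
     psum (ptail s) ≤ psum (ptail s1) + ∑ᶠ l, conjPart (w1 l) 0) := by
  constructor
  · rintro ⟨w, r, -, -, hbounds, rfl, hcmaj, hsize⟩
    have hww1 : w ≤ w1 := fun l i => (hbounds l i).1
    have hw1w : w1 ≤ w + 1 := fun l i => (hbounds l i).2
    have hlower := wsum_le_wsum hw1 hww1
    have hupper := wsum_le_wsum_add_conjPart hw1 hww1 hw1w
    exact ⟨hcmaj, by omega, by omega⟩
  · rintro ⟨hcmaj, hlower, hupper⟩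
    obtain ⟨w, hw, hww1, hw1w, hsize⟩ :=
      hw1.exists_lower_wsum_eq (d := psum (ptail s) - psum (ptail s1)) (by omega)
    exact ⟨w, r1, hw, hr1, fun l i => ⟨hww1 l i, hw1w l i⟩, rfl, hcmaj, by omega⟩

/-- `H_1(s)` has Weyr characteristic `(W¹, r_*¹, s_*¹)`, with
`z_1¹(λ) = #{i ≥ 1 : w¹_i(λ) ≥ 1}`, and `s_*` is a partition.  The existence
of pencils `H(s)`, `h(s)` with `H(s)` strictly equivalent to stacking `h(s)` on
`H_1(s)`, `rank H = rank H_1`, and `s_*` the row Brunovsky partition of `H(s)`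
— equivalently (by the equal-rank one-row completion characterization and the
existence of pencils with prescribed Weyr characteristic) the existence of
Weyr data `W, r_*` completing `s_*` — holds iff `s_*¹ ∠ s_*` and
`0 ≤ |s| − |s¹| ≤ Σ_λ z_1¹(λ)`. -/
theorem prescribed_row_brunovsky_completion_iff
    {F : Type*} [Field F] [IsAlgClosed F]
    (w1 : Option F → ℕ → ℕ) (r1 s1 s : ℕ → ℕ)
    (hw1 : IsEigPartitions w1) (hr1 : IsPartition r1) (hs1 : IsPartition s1)
    (hs : IsPartition s) :
    (∃ w : Option F → ℕ → ℕ, ∃ r : ℕ → ℕ,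
        IsEigPartitions w ∧ IsPartition r ∧
        (∀ l i, w l i ≤ w1 l i ∧ w1 l i ≤ w l i + 1) ∧
        r = r1 ∧ CMaj s1 s ∧
        wsum w + psum (ptail r) + psum (ptail s) =
          wsum w1 + psum (ptail r1) + psum (ptail s1)) ↔
    (CMaj s1 s ∧
     psum (ptail s1) ≤ psum (ptail s) ∧
     psum (ptail s) ≤ psum (ptail s1) + ∑ᶠ l, conjPart (w1 l) 0) :=
  prescribed_row_brunovsky_completion_iff_general w1 r1 s1 s hw1 hr1
end

section
/- Let H_1(s) ∈ F[s]^{(m−1)×n} be a matrix pencil over an algebraically closed field F with Weyr characteristic (W^1, r_*^1, s_*^1), and let c^1 = (c^1_1, c^1_2, ...) be the conjugate partition of r^1 = (r^1_1, r^1_2, ...). Let w(λ), λ ∈ F ∪ {∞}, be partitions with finite support, and set W as their collection. There exist pencils H(s) ∈ F[s]^{m×n} and h(s) ∈ F[s]^{1×n} with H(s) strictly equivalent to stacking h(s) on H_1(s), rank(H(s)) = rank(H_1(s)) + 1, and W the Weyr characteristic of the regular part of H(s), if and only if: w_i(λ) − 1 ≤ w^1_i(λ) ≤ w_i(λ) for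 all i ≥ 1 and λ; r^1_0 ≥ 1; if r^1_0 = 1 then |W| − |W^1| − 1 = c^1_1; and if r^1_0 > 1 then |W| − |W^1| − 1 = c^1_1 or |W| − |W^1| − 1 ≤ c^1_2. -/
lemma psum_eq_sum (p : ℕ → ℕ) {N : ℕ} (h : ∀ i, N ≤ i → p i = 0) :
    psum p = ∑ i ∈ Finset.range N, p i := by
  apply finsum_eq_sum_of_support_subset
  intro x hx
  simp only [Function.mem_support] at hx
  simp only [Finset.coe_range, Set.mem_Iio]
  by_contra hc
  exact hx (h x (by omega))

lemma isPartition_ptail {p : ℕ → ℕ} (hp : IsPartition p) : IsPartition (ptail p) := by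
  obtain ⟨hm, N, hN⟩ := hp
  exact ⟨fun i j hij => hm (i+1) (j+1) (by omega), N, fun i hi => hN (i+1) (by omega)⟩

lemma conjPart_iff {p : ℕ → ℕ} (hp : IsPartition p) (k i : ℕ) :
    k + 1 ≤ p i ↔ i < conjPart p k := by
  obtain ⟨hmono, N, hN⟩ := hp
  have hex : ∃ n, p n ≤ k := ⟨N, by simp [hN N le_rfl]⟩
  have hset : {i : ℕ | k + 1 ≤ p i} = Set.Iio (Nat.find hex) := by
    ext j
    simp only [Set.mem_setOf_eq, Set.mem_Iio]
    constructor
    · intro hj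
      by_contra hlt
      push_neg at hlt
      have h1 := hmono _ j hlt
      have h2 := Nat.find_spec hex
      omega
    · intro hj
      have := Nat.find_min hex hj
      omega
  have hc : conjPart p k = Nat.find hex := by
    rw [conjPart, hset, ← Finset.coe_Iio, Nat.card_coe_set_eq,
      Set.ncard_coe_finset, Nat.card_Iio]
  rw [hc]
  constructor
  · intro hj
    by_contra hlt
    push_neg at hlt
    have h1 := hmono _ i hlt
    have h2 := Nat.find_spec hex
    omega
  · intro hj
    have := Nat.find_min hex hj
    omega

lemma indicator_sum (M c : ℕ) (h : c ≤ M) :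
    (∑ i ∈ Finset.range M, (if i < c then (1:ℤ) else 0)) = c := by
  have hsub : Finset.range c ⊆ Finset.range M := Finset.range_subset_range.2 h
  have h1 := Finset.sum_subset hsub
    (f := fun i => if i < c then (1:ℤ) else 0)
    (by intro x hx hxc; simp only [Finset.mem_range] at hx hxc ⊢
        simp only [if_neg hxc])
  rw [← h1]
  rw [Finset.sum_congr rfl (fun i hi => if_pos (Finset.mem_range.mp hi))]
  simp

lemma construct_r (r1 : ℕ → ℕ) (hr1 : IsPartition r1) (g K : ℕ)
    (hg : g ≤ conjPart (ptail r1) 0)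
    (H1 : ∀ i, i ≤ g → 1 ≤ r1 i) (H2 : 1 ≤ K → 2 ≤ r1 g)
    (H3 : ∀ i, g < i → r1 i ≤ 1) (H4 : ∀ i, g + K < i → r1 i = 0) :
    ∃ r : ℕ → ℕ, IsPartition r ∧ CMaj r r1 ∧
      (psum (ptail r) : ℤ) = (psum (ptail r1) : ℤ) + K - conjPart (ptail r1) 0 := by
  classical
  set c1 := conjPart (ptail r1) 0 with hc1
  have char1 : ∀ i, 1 ≤ r1 (i + 1) ↔ i < c1 := fun i =>
    conjPart_iff (isPartition_ptail hr1) 0 i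
  have hc1le : c1 ≤ g + K := by
    by_contra hcon
    push_neg at hcon
    have h1 : 1 ≤ r1 (g + K + 1) := (char1 (g + K)).2 hcon
    have h2 := H4 (g + K + 1) (by omega)
    omega
  refine ⟨fun i => if i ≤ g then r1 i - 1 else if i ≤ g + K then 1 else 0, ?_, ?_, ?_⟩
  · constructor
    · intro i j hij
      by_cases hi : i ≤ g
      · by_cases hj : j ≤ g
        · simp only [if_pos hi, if_pos hj]
          exact Nat.sub_le_sub_right (hr1.1 i j hij) 1
        · simp only [if_pos hi, if_neg hj]
          by_cases hj2 : j ≤ g + K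
          · simp only [if_pos hj2]
            have hK : 1 ≤ K := by omega
            have := H2 hK
            have := hr1.1 i g hi
            omega
          · simp only [if_neg hj2]; omega
      · have hjg : ¬ j ≤ g := by omega
        simp only [if_neg hi, if_neg hjg]
        by_cases hi2 : i ≤ g + K
        · by_cases hj2 : j ≤ g + K <;> simp [hi2, hj2]
        · have hj2 : ¬ j ≤ g + K := by omega
          simp [hi2, hj2]
    · exact ⟨g + K + 1, fun i hi => by
        have h1 : ¬ i ≤ g := by omega
        have h2 : ¬ i ≤ g + K := by omega
        simp [h1, h2]⟩
  · constructor
    · have := H1 0 (Nat.zero_le g)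
      simp only [if_pos (Nat.zero_le g)]
      omega
    · have hset : {j | (if j ≤ g then r1 j - 1 else if j ≤ g + K then 1 else 0) < r1 j}
          = Set.Iic g := by
        ext j
        simp only [Set.mem_setOf_eq, Set.mem_Iic]
        constructor
        · intro hj
          by_contra hcon
          push_neg at hcon
          have h3 := H3 j hcon
          have h1 : ¬ j ≤ g := by omega
          by_cases h2 : j ≤ g + K
          · simp only [if_neg h1, if_pos h2] at hj; omega
          · have := H4 j (by omega)
            simp only [if_neg h1, if_neg h2] at hj; omega
        · intro hj
          have := H1 j hj
          simp only [if_pos hj]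
          omega
      rw [hset, csSup_Iic]
      intro i hi
      have := H1 i hi
      simp only [if_pos hi]
      omega
  · have hzr : ∀ i, g + K ≤ i →
        (fun i => if i + 1 ≤ g then r1 (i+1) - 1 else if i + 1 ≤ g + K then 1 else 0) i = 0 := by
      intro i hi
      have h1 : ¬ i + 1 ≤ g := by omega
      have h2 : ¬ i + 1 ≤ g + K := by omega
      simp [h1, h2]
    have hzr1 : ∀ i, g + K ≤ i → ptail r1 i = 0 := by
      intro i hi
      exact H4 (i + 1) (by omega)
    rw [show (ptail fun i => if i ≤ g then r1 i - 1 else if i ≤ g + K then 1 else 0)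
        = fun i => if i + 1 ≤ g then r1 (i+1) - 1 else if i + 1 ≤ g + K then 1 else 0 from rfl]
    rw [psum_eq_sum _ hzr, psum_eq_sum _ hzr1]
    have hterm : ∀ i ∈ Finset.range (g + K),
        ((if i + 1 ≤ g then r1 (i+1) - 1 else if i + 1 ≤ g + K then 1 else 0 : ℕ) : ℤ)
          = (ptail r1 i : ℤ) - (if i < c1 then 1 else 0) + (if g ≤ i then 1 else 0) := by
      intro i hi
      simp only [Finset.mem_range] at hi
      by_cases h1 : i + 1 ≤ g
      · have hic1 : i < c1 := by omega
        have := H1 (i+1) h1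
        simp only [if_pos h1, if_pos hic1, if_neg (by omega : ¬ g ≤ i), ptail]
        push_cast [Nat.cast_sub this]
        ring
      · have h2 : i + 1 ≤ g + K := by omega
        have hgi : g ≤ i := by omega
        have h3 := H3 (i+1) (by omega)
        simp only [if_neg h1, if_pos h2, if_pos hgi, ptail]
        by_cases hic1 : i < c1
        · have := (char1 i).2 hic1
          simp only [if_pos hic1]
          omega
        · have : ¬ 1 ≤ r1 (i+1) := fun hcon => hic1 ((char1 i).1 hcon)
          simp only [if_neg hic1]
          omega
    rw [Nat.cast_sum, Nat.cast_sum]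
    rw [Finset.sum_congr rfl hterm]
    rw [Finset.sum_add_distrib, Finset.sum_sub_distrib]
    rw [indicator_sum _ _ hc1le]
    have hK : (∑ i ∈ Finset.range (g + K), (if g ≤ i then (1:ℤ) else 0)) = K := by
      have : ∀ i ∈ Finset.range (g+K), (if g ≤ i then (1:ℤ) else 0)
          = 1 - (if i < g then 1 else 0) := by
        intro i _
        by_cases h : g ≤ i
        · simp [h, if_neg (by omega : ¬ i < g)]
        · simp [h, if_pos (by omega : i < g)]
      rw [Finset.sum_congr rfl this, Finset.sum_sub_distrib,
        indicator_sum _ _ (by omega)]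
      simp
    rw [hK]
    ring

/-- STATEMENT 18: `H_1(s)` has Weyr characteristic `(W¹, r_*¹, s_*¹)`, with
`c¹` the conjugate partition of the tail `r¹ = (r¹_1, r¹_2, …)`, and `w(λ)`,
`λ ∈ F ∪ {∞}`, are partitions of finite support.  The existence of pencils
`H(s)`, `h(s)` with `H(s)` strictly equivalent to stacking `h(s)` on `H_1(s)`,
`rank H = rank H_1 + 1`, and `W` the Weyr characteristic of the regular part
of `H(s)` — equivalently (by the rank-increase one-row completion
characterization and the existence of pencils with prescribed Weyr
characteristic) the existence of partitions `r_*, s_*` completing `W` —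
holds iff: `w_i(λ) − 1 ≤ w¹_i(λ) ≤ w_i(λ)`; `r¹_0 ≥ 1`; if `r¹_0 = 1` then
`|W| − |W¹| − 1 = c¹_1`; and if `r¹_0 > 1` then `|W| − |W¹| − 1 = c¹_1` or
`|W| − |W¹| − 1 ≤ c¹_2`. -/
theorem prescribed_regular_part_completion_rank_inc_iff
    {F : Type*} [Field F] [IsAlgClosed F]
    (w1 w : Option F → ℕ → ℕ) (r1 s1 : ℕ → ℕ)
    (hw1 : IsEigPartitions w1) (hw : IsEigPartitions w)
    (hr1 : IsPartition r1) (hs1 : IsPartition s1) :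
    (∃ r s : ℕ → ℕ, IsPartition r ∧ IsPartition s ∧
        (∀ l i, w1 l i ≤ w l i ∧ w l i ≤ w1 l i + 1) ∧
        CMaj r r1 ∧ s = s1 ∧
        wsum w + psum (ptail r) + psum (ptail s) =
          wsum w1 + psum (ptail r1) + psum (ptail s1) + 1) ↔
    ((∀ l i, w1 l i ≤ w l i ∧ w l i ≤ w1 l i + 1) ∧
     1 ≤ r1 0 ∧
     (r1 0 = 1 →
       (wsum w : ℤ) - (wsum w1 : ℤ) - 1 = (conjPart (ptail r1) 0 : ℤ)) ∧
     (1 < r1 0 →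
       (wsum w : ℤ) - (wsum w1 : ℤ) - 1 = (conjPart (ptail r1) 0 : ℤ) ∨
       (wsum w : ℤ) - (wsum w1 : ℤ) - 1 ≤ (conjPart (ptail r1) 1 : ℤ))) := by
  classical
  set c1 := conjPart (ptail r1) 0 with hc1def
  set c2 := conjPart (ptail r1) 1 with hc2def
  have char1 : ∀ i, 1 ≤ r1 (i + 1) ↔ i < c1 := fun i =>
    conjPart_iff (isPartition_ptail hr1) 0 i
  have char2 : ∀ i, 2 ≤ r1 (i + 1) ↔ i < c2 := fun i =>
    conjPart_iff (isPartition_ptail hr1) 1 i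
  have hposle : ∀ j, 1 ≤ r1 j → j ≤ c1 := by
    intro j hj
    cases j with
    | zero => exact Nat.zero_le _
    | succ k => have := (char1 k).1 hj; omega
  have hc2c1 : c2 ≤ c1 := by
    by_contra hcon
    push_neg at hcon
    have h2 : 2 ≤ r1 (c1 + 1) := (char2 c1).2 hcon
    have h1 : c1 < c1 := (char1 c1).1 (by omega)
    omega
  obtain ⟨hm1, N1, hN1⟩ := hr1
  constructor
  · rintro ⟨r, s, hrp, hsp, hwcond, hCM, rfl, heq⟩
    obtain ⟨hmr, Nr, hNr⟩ := hrp
    set g := sSup {j | r j < r1 j} with hgdef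
    have h0 : r1 0 = r 0 + 1 := hCM.1
    have hbdd : BddAbove {j | r j < r1 j} := by
      refine ⟨N1, fun j hj => ?_⟩
      simp only [Set.mem_setOf_eq] at hj
      by_contra hc
      push_neg at hc
      have := hN1 j (by omega)
      omega
    have hgmem : g ∈ {j | r j < r1 j} :=
      Nat.sSup_mem ⟨0, by simp only [Set.mem_setOf_eq]; omega⟩ hbdd
    simp only [Set.mem_setOf_eq] at hgmem
    have hgle : ∀ j, r j < r1 j → j ≤ g := fun j hj => le_csSup hbdd hj
    have htail : ∀ i, g < i → r1 i ≤ r i := by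
      intro i hi
      by_contra hc
      push_neg at hc
      have := hgle i hc
      omega
    have hdec : ∀ i ≤ g, r1 i = r i + 1 := hCM.2
    have hgc1 : g ≤ c1 := hposle g (by omega)
    set M := N1 + Nr + g with hMdef
    have hzr : ∀ i, M ≤ i → ptail r i = 0 := fun i hi => hNr (i+1) (by omega)
    have hzr1 : ∀ i, M ≤ i → ptail r1 i = 0 := fun i hi => hN1 (i+1) (by omega)
    have hpt : psum (ptail r) = ∑ i ∈ Finset.range M, r (i+1) := psum_eq_sum _ hzr
    have hpt1 : psum (ptail r1) = ∑ i ∈ Finset.range M, r1 (i+1) := psum_eq_sum _ hzr1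
    set E := ∑ i ∈ Finset.Ico g M, ((r (i+1) : ℤ) - (r1 (i+1) : ℤ)) with hEdef
    have hE0 : 0 ≤ E := by
      apply Finset.sum_nonneg
      intro i hi
      simp only [Finset.mem_Ico] at hi
      have := htail (i+1) (by omega)
      simp only [sub_nonneg, Nat.cast_le]
      exact this
    have hsum : (psum (ptail r1) : ℤ) - (psum (ptail r) : ℤ) = (g : ℤ) - E := by
      rw [hpt, hpt1, Nat.cast_sum, Nat.cast_sum]
      have hgM : g ≤ M := by omega
      rw [Finset.range_eq_Ico,
        ← Finset.sum_Ico_consecutive _ (Nat.zero_le g) hgM,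
        ← Finset.sum_Ico_consecutive _ (Nat.zero_le g) hgM]
      have hfirst : ∀ i ∈ Finset.Ico 0 g, ((r1 (i+1) : ℤ)) = (r (i+1) : ℤ) + 1 := by
        intro i hi
        simp only [Finset.mem_Ico] at hi
        have := hdec (i+1) (by omega)
        push_cast [this]
        ring
      rw [Finset.sum_congr rfl hfirst, Finset.sum_add_distrib, hEdef, Finset.sum_sub_distrib]
      simp only [Finset.sum_const, Nat.card_Ico, Nat.sub_zero, nsmul_eq_mul, mul_one]
      ring
    have hDeq : (wsum w : ℤ) - (wsum w1 : ℤ) - 1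
        = (psum (ptail r1) : ℤ) - (psum (ptail r) : ℤ) := by omega
    refine ⟨hwcond, by omega, ?_, ?_⟩
    · intro h11
      have hr00 : r 0 = 0 := by omega
      have rz : ∀ i, r i = 0 := fun i => by
        have := hmr 0 i (Nat.zero_le i); omega
      have hE : E = 0 := by
        apply Finset.sum_eq_zero
        intro i hi
        simp only [Finset.mem_Ico] at hi
        have h1 := htail (i+1) (by omega)
        have h2 := rz (i+1)
        have : r1 (i+1) = 0 := by omega
        rw [h2, this]
        simp
      have hc1g : c1 ≤ g := by
        rcases Nat.eq_zero_or_pos c1 with h | h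
        · omega
        · obtain ⟨k, hk⟩ : ∃ k, c1 = k + 1 := ⟨c1 - 1, by omega⟩
          have h1 : 1 ≤ r1 (k+1) := (char1 k).2 (by omega)
          have := hgle (k+1) (by rw [rz]; omega)
          omega
      have : g = c1 := le_antisymm hgc1 hc1g
      rw [hDeq, hsum, hE, this]
      ring
    · intro h12
      by_cases hgc2 : g ≤ c2
      · right
        have : (g : ℤ) ≤ (c2 : ℤ) := by exact_mod_cast hgc2
        rw [hDeq, hsum]
        linarith
      · left
        push_neg at hgc2
        obtain ⟨k, hk⟩ : ∃ k, g = k + 1 := ⟨g - 1, by omega⟩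
        have hr1g1 : r1 g ≤ 1 := by
          by_contra hcon
          push_neg at hcon
          rw [hk] at hcon
          have h2 : k < c2 := (char2 k).1 (by omega)
          omega
        have hr1g : r1 g = 1 := by omega
        have hrg : r g = 0 := by
          have := hdec g le_rfl; omega
        have rz : ∀ i, g ≤ i → r i = 0 := fun i hi => by
          have := hmr g i hi; omega
        have hE : E = 0 := by
          apply Finset.sum_eq_zero
          intro i hi
          simp only [Finset.mem_Ico] at hi
          have h1 := htail (i+1) (by omega)
          have h2 := rz (i+1) (by omega)
          have : r1 (i+1) = 0 := by omega
          rw [h2, this]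
          simp
        have hc1g : c1 ≤ g := by
          by_contra hcon
          push_neg at hcon
          have h1 : 1 ≤ r1 (g+1) := (char1 g).2 hcon
          have h2 := htail (g+1) (by omega)
          have := rz (g+1) (by omega)
          omega
        have : g = c1 := le_antisymm hgc1 hc1g
        rw [hDeq, hsum, hE, this]
        ring
  · rintro ⟨hwcond, h1, hcond1, hcond2⟩
    by_cases hDc1 : (wsum w : ℤ) - (wsum w1 : ℤ) - 1 = (c1 : ℤ)
    · obtain ⟨r, hrp, hCM, hre⟩ := construct_r r1 ⟨hm1, N1, hN1⟩ c1 0 le_rfl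
        (by intro i hi
            cases i with
            | zero => exact h1
            | succ k => exact (char1 k).2 (by omega))
        (by omega)
        (by intro i hi
            cases i with
            | zero => omega
            | succ k =>
              have : ¬ 1 ≤ r1 (k+1) := fun h => by have := (char1 k).1 h; omega
              omega)
        (by intro i hi
            cases i with
            | zero => omega
            | succ k =>
              have : ¬ 1 ≤ r1 (k+1) := fun h => by have := (char1 k).1 h; omega
              omega)
      exact ⟨r, s1, hrp, hs1, hwcond, hCM, rfl, by push_cast at hre; omega⟩
    · have h12 : 1 < r1 0 := by
        rcases Nat.lt_or_ge 1 (r1 0) with h | h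
        · exact h
        · have : r1 0 = 1 := by omega
          exact absurd (hcond1 this) hDc1
      have hDc2 : (wsum w : ℤ) - (wsum w1 : ℤ) - 1 ≤ (c2 : ℤ) := by
        rcases hcond2 h12 with h | h
        · exact absurd h hDc1
        · exact h
      set K : ℕ := ((c1 : ℤ) - ((wsum w : ℤ) - (wsum w1 : ℤ) - 1)).toNat with hKdef
      have hc2c1' : (c2 : ℤ) ≤ (c1 : ℤ) := by exact_mod_cast hc2c1
      have hKcast : (K : ℤ) = (c1 : ℤ) - ((wsum w : ℤ) - (wsum w1 : ℤ) - 1) :=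
        Int.toNat_of_nonneg (by linarith)
      have hc1c2K : c1 ≤ c2 + K := by omega
      obtain ⟨r, hrp, hCM, hre⟩ := construct_r r1 ⟨hm1, N1, hN1⟩ c2 K hc2c1
        (by intro i hi
            cases i with
            | zero => omega
            | succ k => have := (char2 k).2 (by omega); omega)
        (by intro _
            cases hc : c2 with
            | zero => rw [hc] at *; omega
            | succ k =>
              have := (char2 k).2 (by omega)
              rw [hc] at *; omega)
        (by intro i hi
            cases i with
            | zero => omega
            | succ k =>
              have : ¬ 2 ≤ r1 (k+1) := fun h => by have := (char2 k).1 h; omega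
              omega)
        (by intro i hi
            cases i with
            | zero => omega
            | succ k =>
              have : ¬ 1 ≤ r1 (k+1) := fun h => by have := (char1 k).1 h; omega
              omega)
      exact ⟨r, s1, hrp, hs1, hwcond, hCM, rfl, by omega⟩
end
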